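/- arXiv:1002.3338 — 4 statements merged into one kernel-verified Lean document; each statement's English description precedes it below -/
import Mathlib

section
/- Let D ⊆ ℝℙⁿ be an open properly convex set. Then there exists a sequence (D_k) of open subsets of D with closure(D_k) compact and contained in D_{k+1} for every k, and ⋃_k D_k = D, such that, in an affine chart ℝⁿ = ℝℙⁿ \ H in which D is bounded, each D_k is a bounded strictly convex open subset of ℝⁿ whose boundary is a real-analytic hypersurface (near every boundary point, ∂D_k is the zero set of a real-analytic function with nonvanishing gradient). -/
noncomputable section

abbrev RV (n : ℕ) : Type := Fin (n + 1) → ℝ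
abbrev RP (n : ℕ) : Type := Projectivization ℝ (RV n)

/-- The quotient topology on a projectivization. -/
instance projTopology {K V : Type*} [DivisionRing K] [AddCommGroup V] [Module K V]
    [TopologicalSpace V] : TopologicalSpace (Projectivization K V) :=
  inferInstanceAs (TopologicalSpace (Quotient (projectivizationSetoid K V)))

/-- Real projective lines. -/
def isLineR {n : ℕ} (L : Set (RP n)) : Prop :=
  ∃ W : Submodule ℝ (RV n), Module.finrank ℝ W = 2 ∧ L = {x | x.rep ∈ W}

/-- Convexity in real projective space. -/
def convexR {n : ℕ} (D : Set (RP n)) : Prop :=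
  (∀ L, isLineR L → ¬ L ⊆ D) ∧ ∀ L, isLineR L → IsPreconnected (D ∩ L)

/-- Projective hyperplanes in real projective space. -/
def isHypR {n : ℕ} (H : Set (RP n)) : Prop :=
  ∃ ξ : Module.Dual ℝ (RV n), ξ ≠ 0 ∧ H = {x | ξ x.rep = 0}

/-- Proper convexity in real projective space. -/
def properlyConvexR {n : ℕ} (D : Set (RP n)) : Prop :=
  convexR D ∧ (∀ H, isHypR H → ¬ D ⊆ H) ∧
    ∀ L, isLineR L → ∀ p ∈ L, ¬ (L \ {p}) ⊆ D

/-- The affine chart `ℝⁿ = ℝℙⁿ \ H` of real projective space associated to `g ∈ GL(n+1,ℝ)`,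
sending `x` to the class of `g (x, 1)`. -/
def chartMap {n : ℕ} (g : Matrix.GeneralLinearGroup (Fin (n + 1)) ℝ) (x : Fin n → ℝ) : RP n :=
  Projectivization.mk ℝ ((g : Matrix (Fin (n + 1)) (Fin (n + 1)) ℝ).mulVec (Fin.snoc x 1))
    (by
      intro h0
      have h1 : ((↑g⁻¹ : Matrix (Fin (n + 1)) (Fin (n + 1)) ℝ) *
          (↑g : Matrix (Fin (n + 1)) (Fin (n + 1)) ℝ)).mulVec (Fin.snoc x 1) = 0 := by
        rw [← Matrix.mulVec_mulVec, h0, Matrix.mulVec_zero]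
      rw [Units.inv_mul, Matrix.one_mulVec] at h1
      have h2 := congrFun h1 (Fin.last n)
      simp [Fin.snoc_last] at h2)

/-- A bounded convex open set in `ℝⁿ` is strictly convex if its boundary contains no
nondegenerate line segment. -/
def strictlyConvexSet {n : ℕ} (A : Set (Fin n → ℝ)) : Prop :=
  ∀ x ∈ frontier A, ∀ y ∈ frontier A, x ≠ y → ¬ segment ℝ x y ⊆ frontier A

/-- The boundary of `A ⊆ ℝⁿ` is a real-analytic hypersurface: near every boundary point it
is the zero set of a real-analytic function with nonvanishing gradient. -/
def analyticBoundary {n : ℕ} (A : Set (Fin n → ℝ)) : Prop :=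
  ∀ a ∈ frontier A, ∃ (U : Set (Fin n → ℝ)) (f : (Fin n → ℝ) → ℝ),
    IsOpen U ∧ a ∈ U ∧ (∀ x ∈ U, AnalyticAt ℝ f x) ∧
    frontier A ∩ U = {x ∈ U | f x = 0} ∧
    ∀ x ∈ frontier A ∩ U, fderiv ℝ f x ≠ 0

/-!
In the chart `x ↦ [g (x, 1)]` the set `D` becomes a bounded open set `A ⊆ ℝⁿ`. It is convex: for
`x ≠ y` in `A`, the inverse chart maps `D ∩ L`, `L` the projective line through the images of `x`
and `y`, continuously onto `A ∩ (line through x and y)`, a preconnected subset of a line containing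
`x` and `y`, hence containing the segment.

`A` is exhausted by the shrunken copies `homothety p t '' A`, `t ↑ 1`, each with closure inside the
next. Between the closure `C` of one copy and the next copy `B` we fit a sublevel set `{F < 1}` of
`F x = ∑ᵢ exp (M (ℓᵢ x - uᵢ)) + ε ‖x‖₂²`: Hahn–Banach at finitely many points of the compact
`frontier B` gives half-spaces `ℓᵢ ≤ uᵢ` containing a neighbourhood of `C` and cutting out a convex
set that misses `frontier B`, hence lies in `B`. `F` is analytic and strictly convex, so
`{F < 1}` is strictly convex, and `F` has no critical point on `{F = 1}` because it takes smaller
values inside. Finally chart images of compact sets are closed in `ℝℙⁿ`, which carries the nesting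
of closures back to projective space.
-/

open Set

section ConvexAnalysis

variable {E : Type*} [NormedAddCommGroup E] [NormedSpace ℝ E]

theorem StrictConvexOn.const_mul {s : Set E} {f : E → ℝ} (hf : StrictConvexOn ℝ s f) {c : ℝ}
    (hc : 0 < c) : StrictConvexOn ℝ s fun x => c * f x :=
  ⟨hf.1, fun x hx y hy hxy a b ha hb hab => by
    simpa only [smul_eq_mul, mul_add, mul_left_comm c] using
      mul_lt_mul_of_pos_left (hf.2 hx hy hxy ha hb hab) hc⟩

theorem strictConvexOn_univ_sum_sq {ι : Type*} [Fintype ι] :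
    StrictConvexOn ℝ univ fun x : ι → ℝ => ∑ i, x i ^ 2 := by
  refine ⟨convex_univ, fun x _ y _ hxy a b ha hb hab => ?_⟩
  obtain ⟨j, hj⟩ := Function.ne_iff.1 hxy
  have hsq := Even.strictConvexOn_pow even_two two_ne_zero
  simp only [smul_eq_mul, Finset.mul_sum, ← Finset.sum_add_distrib]
  refine Finset.sum_lt_sum (fun i _ => ?_) ⟨j, Finset.mem_univ _, ?_⟩
  · simpa using hsq.convexOn.2 (mem_univ (x i)) (mem_univ (y i)) ha.le hb.le hab
  · simpa using hsq.2 (mem_univ (x j)) (mem_univ (y j)) hj ha hb hab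

theorem ConvexOn.fderiv_ne_zero_of_lt {f : E → ℝ} (hf : ConvexOn ℝ univ f) {x z : E}
    (hd : DifferentiableAt ℝ f x) (hlt : f z < f x) : fderiv ℝ f x ≠ 0 := by
  intro h0
  have hfx : HasFDerivAt f (0 : E →L[ℝ] ℝ) (AffineMap.lineMap x z (0 : ℝ)) := by
    simpa [h0] using hd.hasFDerivAt
  have hline : HasDerivAt (f ∘ AffineMap.lineMap (k := ℝ) x z) 0 0 := by
    simpa using hfx.comp_hasDerivAt (0 : ℝ) AffineMap.hasDerivAt_lineMap
  have := (hf.comp_affineMap (AffineMap.lineMap x z)).le_slope_of_hasDerivAt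
    (mem_univ 0) (mem_univ 1) zero_lt_one hline
  simp only [slope_def_field, Function.comp_apply, AffineMap.lineMap_apply_one,
    AffineMap.lineMap_apply_zero, sub_zero, div_one, sub_nonneg] at this
  exact hlt.not_ge this

theorem ConvexOn.frontier_setOf_lt {f : E → ℝ} (hf : ConvexOn ℝ univ f) (hcont : Continuous f)
    {r : ℝ} {c : E} (hc : f c < r) : frontier {x | f x < r} = {x | f x = r} := by
  refine (frontier_lt_subset_eq hcont continuous_const).antisymm fun x (hx : f x = r) => ?_
  have hopen : IsOpen {x | f x < r} := isOpen_lt hcont continuous_const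
  refine ⟨?_, by simp [hopen.interior_eq, hx]⟩
  have hseg : openSegment ℝ c x ⊆ {x | f x < r} := fun z hz =>
    lt_of_not_ge fun hzr => (hf.le_left_of_right_le (mem_univ c) (mem_univ x) hz
      (hx.trans_le hzr)).not_gt (hc.trans_le hzr)
  exact closure_mono hseg (segment_subset_closure_openSegment (right_mem_segment ℝ c x))

theorem IsPreconnected.segment_subset {P : Set E} {x y : E} (hxy : x ≠ y) (hP : IsPreconnected P)
    (hPl : P ⊆ Set.range (AffineMap.lineMap x y : ℝ → E)) (hx : x ∈ P) (hy : y ∈ P) :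
    segment ℝ x y ⊆ P := by
  have hline : (AffineMap.lineMap x y : ℝ → E) = (· + x) ∘ fun t : ℝ => t • (y - x) := by
    ext t
    simp [AffineMap.lineMap_apply_module']
  have hind : Topology.IsInducing (AffineMap.lineMap x y : ℝ → E) := hline ▸
    ((Homeomorph.addRight x).isEmbedding.comp
      (isClosedEmbedding_smul_left (sub_ne_zero.2 hxy.symm)).isEmbedding).isInducing
  have hpre : IsPreconnected (AffineMap.lineMap x y ⁻¹' P : Set ℝ) :=
    hind.isPreconnected_image.1 (by rwa [Set.image_preimage_eq_of_subset hPl])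
  rw [segment_eq_image_lineMap]
  rintro _ ⟨t, ht, rfl⟩
  exact hpre.Icc_subset (a := 0) (b := 1) (by simpa using hx) (by simpa using hy) ht

end ConvexAnalysis

section SublevelSets

variable {n : ℕ}

structure IsAnalyticStrictlyConvexBody (S : Set (Fin n → ℝ)) : Prop where
  isOpen : IsOpen S
  convex : Convex ℝ S
  isBounded : Bornology.IsBounded S
  strictlyConvex : strictlyConvexSet S
  analytic : analyticBoundary S

theorem isAnalyticStrictlyConvexBody_empty : IsAnalyticStrictlyConvexBody (∅ : Set (Fin n → ℝ)) :=
  ⟨isOpen_empty, convex_empty, Bornology.isBounded_empty, by simp [strictlyConvexSet],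
    by simp [analyticBoundary]⟩

variable {F : (Fin n → ℝ) → ℝ} {r : ℝ} {c : Fin n → ℝ}

theorem strictlyConvexSet_setOf_lt (hF : StrictConvexOn ℝ univ F) (hcont : Continuous F)
    (hc : F c < r) : strictlyConvexSet {x | F x < r} := by
  rw [strictlyConvexSet, hF.convexOn.frontier_setOf_lt hcont hc]
  intro x (hx : F x = r) y (hy : F y = r) hxy hseg
  have hmid := hF.lt_on_openSegment (mem_univ x) (mem_univ y) hxy (midpoint_mem_openSegment x y)
  rw [hx, hy, max_self, ← hseg (midpoint_mem_segment x y)] at hmid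
  exact hmid.false

theorem analyticBoundary_setOf_lt (hF : ConvexOn ℝ univ F) (hFan : ∀ x, AnalyticAt ℝ F x)
    (hc : F c < r) : analyticBoundary {x | F x < r} := by
  have hfr := hF.frontier_setOf_lt (continuous_iff_continuousAt.2 fun x => (hFan x).continuousAt) hc
  refine fun _ _ => ⟨univ, fun x => F x - r, isOpen_univ, mem_univ _,
    fun x _ => (hFan x).sub analyticAt_const, by ext; simp [hfr, sub_eq_zero], ?_⟩
  rintro x ⟨hx, -⟩
  rw [hfr] at hx
  rw [fderiv_sub_const]
  exact hF.fderiv_ne_zero_of_lt (hFan x).differentiableAt (hc.trans_eq hx.symm)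

end SublevelSets

section Polyhedra

variable {E : Type*} [NormedAddCommGroup E] [NormedSpace ℝ E]

theorem exists_dual_add_one_le_of_notMem {C : Set E} (hCc : IsCompact C) (hCconv : Convex ℝ C)
    {y : E} (hy : y ∉ C) : ∃ p : StrongDual ℝ E × ℝ, (∀ a ∈ C, p.1 a + 1 ≤ p.2) ∧ p.2 < p.1 y := by
  obtain ⟨f, u, v, hu, huv, hv⟩ := geometric_hahn_banach_compact_closed hCconv hCc
    (convex_singleton y) isClosed_singleton (disjoint_singleton_right.2 hy)
  have hvu : 0 < v - u := sub_pos.2 huv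
  refine ⟨((v - u)⁻¹ • f, (v - u)⁻¹ * v), fun a ha => ?_, ?_⟩
  · have : f a + (v - u) ≤ v := by linarith [hu a ha]
    calc ((v - u)⁻¹ • f) a + 1 = (v - u)⁻¹ * (f a + (v - u)) := by
          simp [mul_add, inv_mul_cancel₀ hvu.ne']
      _ ≤ (v - u)⁻¹ * v := by gcongr
  · simpa using mul_lt_mul_of_pos_left (hv y rfl) (inv_pos.2 hvu)

theorem convex_setOf_forall_le (T : Finset (StrongDual ℝ E × ℝ)) :
    Convex ℝ {x | ∀ p ∈ T, p.1 x ≤ p.2} := by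
  simp only [ofPred_forall]
  exact convex_iInter₂ fun p _ => convex_halfSpace_le p.1.isLinear p.2

theorem exists_finset_halfSpaces_between [ProperSpace E] {C B : Set E} (hCc : IsCompact C)
    (hCconv : Convex ℝ C) (hCne : C.Nonempty) (hBo : IsOpen B) (hBb : Bornology.IsBounded B)
    (hCB : C ⊆ B) : ∃ T : Finset (StrongDual ℝ E × ℝ),
      (∀ p ∈ T, ∀ a ∈ C, p.1 a + 1 ≤ p.2) ∧ {x | ∀ p ∈ T, p.1 x ≤ p.2} ⊆ B := by
  classical
  have hfrC : ∀ y ∈ frontier B, y ∉ C := fun y hy hyC =>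
    hy.2 (by rw [hBo.interior_eq]; exact hCB hyC)
  choose p hpC hpy using fun y hy => exists_dual_add_one_le_of_notMem hCc hCconv (hfrC y hy)
  have hfr : IsCompact (frontier B) := Metric.isCompact_of_isClosed_isBounded isClosed_frontier
    (hBb.closure.subset frontier_subset_closure)
  obtain ⟨t, ht⟩ := hfr.elim_nhds_subcover' (fun y hy => {w | (p y hy).2 < (p y hy).1 w})
    fun y hy => (isOpen_lt continuous_const (p y hy).1.continuous).mem_nhds (hpy y hy)
  set T := t.image fun y : frontier B => p y y.2
  have hTC : ∀ q ∈ T, ∀ a ∈ C, q.1 a + 1 ≤ q.2 := Finset.forall_mem_image.2 fun y _ => hpC y y.2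
  have hTfr : ∀ x, (∀ q ∈ T, q.1 x ≤ q.2) → x ∉ frontier B := by
    intro x hx hxB
    obtain ⟨y, hyt, hy⟩ := mem_iUnion₂.1 (ht hxB)
    exact (hx _ (Finset.mem_image_of_mem _ hyt)).not_gt hy
  obtain ⟨c, hc⟩ := hCne
  refine ⟨T, hTC, (convex_setOf_forall_le T).isPreconnected.subset_of_closure_inter_subset hBo
    ⟨c, fun q hq => (lt_add_one _).le.trans (hTC q hq c hc), hCB hc⟩ ?_⟩
  rintro x ⟨hxcl, hxT⟩
  by_contra hxB
  exact hTfr x hxT ⟨hxcl, by rwa [hBo.interior_eq]⟩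

end Polyhedra

section Construction

variable {n : ℕ}

theorem convexOn_exp_affine (ℓ : StrongDual ℝ (Fin n → ℝ)) (M u : ℝ) :
    ConvexOn ℝ univ fun x => Real.exp (M * (ℓ x - u)) := by
  refine (convexOn_exp.comp_affineMap
    ((M • (ℓ : (Fin n → ℝ) →ₗ[ℝ] ℝ)).toAffineMap + AffineMap.const ℝ _ (-(M * u)))).congr ?_
  intro x _
  simp [mul_add, sub_eq_add_neg]

def polyhedronBarrier (T : Finset (StrongDual ℝ (Fin n → ℝ) × ℝ)) (M ε : ℝ) (x : Fin n → ℝ) : ℝ :=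
  ∑ p ∈ T, Real.exp (M * (p.1 x - p.2)) + ε * ∑ j, x j ^ 2

variable (T : Finset (StrongDual ℝ (Fin n → ℝ) × ℝ)) (M : ℝ) {ε : ℝ}

theorem strictConvexOn_polyhedronBarrier (hε : 0 < ε) :
    StrictConvexOn ℝ univ (polyhedronBarrier T M ε) := by
  have hexp : ConvexOn ℝ univ fun x => ∑ p ∈ T, Real.exp (M * (p.1 x - p.2)) := by
    simpa only [Finset.sum_fn] using Finset.sum_induction
      (fun (p : StrongDual ℝ (Fin n → ℝ) × ℝ) x => Real.exp (M * (p.1 x - p.2))) (ConvexOn ℝ univ)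
      (fun _ _ => ConvexOn.add) (convexOn_const 0 convex_univ)
      fun p _ => convexOn_exp_affine p.1 M p.2
  exact hexp.add_strictConvexOn (strictConvexOn_univ_sum_sq.const_mul hε)

theorem analyticAt_polyhedronBarrier (ε : ℝ) (x : Fin n → ℝ) :
    AnalyticAt ℝ (polyhedronBarrier T M ε) x := by
  refine (Finset.analyticAt_fun_sum _ fun p _ => ?_).add (analyticAt_const.mul
    (Finset.analyticAt_fun_sum _ fun j _ =>
      ((ContinuousLinearMap.proj (R := ℝ) (φ := fun _ : Fin n => ℝ) j).analyticAt x).pow 2))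
  exact (analyticAt_const.mul ((p.1.analyticAt x).sub analyticAt_const)).rexp

theorem le_of_polyhedronBarrier_lt_one (hε : 0 < ε) (hM : 0 < M) {x : Fin n → ℝ}
    (hx : polyhedronBarrier T M ε x < 1) : ∀ p ∈ T, p.1 x ≤ p.2 := by
  intro p hp
  by_contra! hpx
  have h1 : 1 < Real.exp (M * (p.1 x - p.2)) := Real.one_lt_exp_iff.2 (by nlinarith)
  have h2 := Finset.single_le_sum (f := fun p : StrongDual ℝ (Fin n → ℝ) × ℝ =>
    Real.exp (M * (p.1 x - p.2))) (fun _ _ => (Real.exp_pos _).le) hp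
  have h3 : 0 ≤ ε * ∑ j, x j ^ 2 := by positivity
  simp only [polyhedronBarrier] at hx h2
  linarith

variable {T}

theorem exists_polyhedronBarrier_lt_one {C : Set (Fin n → ℝ)} (hC : IsCompact C)
    (hT : ∀ p ∈ T, ∀ a ∈ C, p.1 a + 1 ≤ p.2) :
    ∃ M > 0, ∃ ε > 0, ∀ a ∈ C, polyhedronBarrier T M ε a < 1 := by
  obtain ⟨Q, hQ0, hQ⟩ : ∃ Q > 0, ∀ a ∈ C, ∑ j, a j ^ 2 ≤ Q := by
    obtain ⟨Q, hQ⟩ :=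
      (hC.image (by fun_prop : Continuous fun a : Fin n → ℝ => ∑ j, a j ^ 2)).bddAbove
    exact ⟨max Q 1, by positivity, fun a ha => (hQ ⟨a, ha, rfl⟩).trans (le_max_left _ _)⟩
  -- on `C` each exponential is at most `K⁻¹`, so their sum is below `1/2`
  set K : ℝ := 2 * (T.card + 1)
  have hK : 1 < K := by simp only [K]; linarith [(T.card.cast_nonneg : (0 : ℝ) ≤ T.card)]
  refine ⟨Real.log K, Real.log_pos hK, (2 * Q)⁻¹, by positivity, fun a ha => ?_⟩
  have hexp : ∀ p ∈ T, Real.exp (Real.log K * (p.1 a - p.2)) ≤ K⁻¹ := fun p hp => by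
    rw [← Real.exp_log (inv_pos.2 (zero_lt_one.trans hK)), Real.log_inv, Real.exp_le_exp]
    nlinarith [hT p hp a ha, Real.log_pos hK]
  have hsum := Finset.sum_le_card_nsmul T _ K⁻¹ hexp
  have hq : (2 * Q)⁻¹ * ∑ j, a j ^ 2 ≤ 1 / 2 := by
    rw [inv_mul_le_iff₀ (by positivity)]; linarith [hQ a ha]
  have hcard : T.card • K⁻¹ < 1 / 2 := by
    rw [nsmul_eq_mul, ← div_eq_mul_inv, div_lt_iff₀ (zero_lt_one.trans hK)]
    simp only [K]; linarith
  simp only [polyhedronBarrier]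
  linarith

end Construction

section Homothety

open AffineMap Filter Topology

variable {E : Type*} [NormedAddCommGroup E] [NormedSpace ℝ E] {A : Set E} {p : E}

theorem Convex.image_homothety_subset (hAc : Convex ℝ A) (hp : p ∈ A) {t : ℝ} (ht : t ∈ Icc 0 1) :
    homothety p t '' A ⊆ A := by
  rintro _ ⟨z, hz, rfl⟩
  rw [homothety_eq_lineMap]
  exact hAc.lineMap_mem hp hz ht

theorem Convex.closure_image_homothety_subset (hAo : IsOpen A) (hAc : Convex ℝ A) (hp : p ∈ A)
    {s t : ℝ} (hs : 0 < s) (hst : s < t) :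
    closure (homothety p s '' A) ⊆ homothety p t '' A := by
  have hopen := homothety_isOpenMap p s hs.ne' A hAo
  have hpi : p ∈ interior (homothety p s '' A) :=
    hopen.interior_eq.symm ▸ ⟨p, hp, homothety_apply_same p s⟩
  refine ((hAc.affine_image _).closure_subset_image_homothety_interior_of_one_lt hpi (t / s)
    ((one_lt_div hs).2 hst)).trans ?_
  rw [hopen.interior_eq, image_image]
  simp_rw [← homothety_mul_apply, div_mul_cancel₀ _ hs.ne']
  rfl

theorem IsOpen.exists_mem_image_homothety (hAo : IsOpen A) {x : E} (hx : x ∈ A) {t : ℕ → ℝ}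
    (ht0 : ∀ k, t k ≠ 0) (hlim : Tendsto t atTop (𝓝 1)) : ∃ k, x ∈ homothety p (t k) '' A := by
  have hcont : ContinuousAt (fun s : ℝ => homothety p s⁻¹ x) 1 := by
    simp only [homothety_apply, vsub_eq_sub, vadd_eq_add]
    exact ((continuousAt_inv₀ one_ne_zero).smul continuousAt_const).add continuousAt_const
  have hx' : homothety p (1 : ℝ)⁻¹ x ∈ A := by simpa using hx
  obtain ⟨k, hk⟩ := ((hcont.tendsto.comp hlim).eventually (hAo.mem_nhds hx')).exists
  refine ⟨k, _, hk, ?_⟩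
  rw [Function.comp_apply, ← homothety_mul_apply, mul_inv_cancel₀ (ht0 k), homothety_one, id_apply]

theorem Convex.exists_homothety_exhaustion (hAo : IsOpen A) (hAc : Convex ℝ A) (hp : p ∈ A) :
    ∃ Ak : ℕ → Set E, (∀ k, IsOpen (Ak k)) ∧ (∀ k, Convex ℝ (Ak k)) ∧ (∀ k, p ∈ Ak k) ∧
      (∀ k, Ak k ⊆ A) ∧ (∀ k, closure (Ak k) ⊆ Ak (k + 1)) ∧ ⋃ k, Ak k = A := by
  set t : ℕ → ℝ := fun k => (k + 1) / (k + 2)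
  have ht0 : ∀ k, 0 < t k := fun k => by positivity
  have htmono : ∀ k, t k < t (k + 1) := fun k => by
    rw [div_lt_div_iff₀ (by positivity) (by positivity)]
    push_cast
    nlinarith
  have hlim : Tendsto t atTop (𝓝 1) := by
    refine ((tendsto_natCast_div_add_atTop (1 : ℝ)).comp (tendsto_add_atTop_nat 1)).congr
      fun k => ?_
    simp only [t, Function.comp_apply]
    push_cast
    ring
  have hsub : ∀ k, homothety p (t k) '' A ⊆ A := fun k =>
    hAc.image_homothety_subset hp ⟨(ht0 k).le, (div_le_one (by positivity)).2 (by linarith)⟩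
  exact ⟨fun k => homothety p (t k) '' A, fun k => homothety_isOpenMap p _ (ht0 k).ne' A hAo,
    fun k => hAc.affine_image _, fun k => ⟨p, hp, homothety_apply_same p _⟩, hsub,
    fun k => hAc.closure_image_homothety_subset hAo hp (ht0 k) (htmono k),
    (iUnion_subset hsub).antisymm fun x hx => mem_iUnion.2 <|
      hAo.exists_mem_image_homothety hx (fun k => (ht0 k).ne') hlim⟩

end Homothety

section Exhaustion

variable {n : ℕ}

theorem exists_isAnalyticStrictlyConvexBody_between {C B : Set (Fin n → ℝ)}
    (hCc : IsCompact C) (hCconv : Convex ℝ C) (hCne : C.Nonempty) (hBo : IsOpen B)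
    (hBb : Bornology.IsBounded B) (hCB : C ⊆ B) :
    ∃ S, IsAnalyticStrictlyConvexBody S ∧ C ⊆ S ∧ S ⊆ B := by
  obtain ⟨T, hTC, hTB⟩ := exists_finset_halfSpaces_between hCc hCconv hCne hBo hBb hCB
  obtain ⟨M, hM, ε, hε, hFC⟩ := exists_polyhedronBarrier_lt_one hCc hTC
  obtain ⟨c, hc⟩ := hCne
  have hF := strictConvexOn_polyhedronBarrier T M hε
  have hFan := analyticAt_polyhedronBarrier T M ε
  have hFcont : Continuous (polyhedronBarrier T M ε) :=
    continuous_iff_continuousAt.2 fun x => (hFan x).continuousAt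
  have hSB : {x | polyhedronBarrier T M ε x < 1} ⊆ B := fun x hx =>
    hTB (le_of_polyhedronBarrier_lt_one T M hε hM hx)
  refine ⟨_, ⟨isOpen_lt hFcont continuous_const, by simpa using hF.convexOn.convex_lt 1,
    hBb.subset hSB, strictlyConvexSet_setOf_lt hF hFcont (hFC c hc),
    analyticBoundary_setOf_lt hF.convexOn hFan (hFC c hc)⟩, hFC, hSB⟩

theorem exists_exhaustion_isAnalyticStrictlyConvexBody {A : Set (Fin n → ℝ)} (hAo : IsOpen A)
    (hAc : Convex ℝ A) (hAb : Bornology.IsBounded A) : ∃ S : ℕ → Set (Fin n → ℝ),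
      (∀ k, IsAnalyticStrictlyConvexBody (S k)) ∧ (∀ k, S k ⊆ A) ∧
        (∀ k, closure (S k) ⊆ S (k + 1)) ∧ ⋃ k, S k = A := by
  rcases A.eq_empty_or_nonempty with rfl | ⟨p, hp⟩
  · exact ⟨fun _ => ∅, fun _ => isAnalyticStrictlyConvexBody_empty, fun _ => subset_rfl,
      fun _ => by simp, iUnion_empty⟩
  obtain ⟨Ak, hAko, hAkc, hpAk, hAkA, hAkcl, hAkU⟩ := hAc.exists_homothety_exhaustion hAo hp
  choose S hS hAkS hSAk using fun k => exists_isAnalyticStrictlyConvexBody_between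
    (hAb.subset (hAkA k)).isCompact_closure (hAkc k).closure ⟨p, subset_closure (hpAk k)⟩
    (hAko (k + 1)) (hAb.subset (hAkA (k + 1))) (hAkcl k)
  have hSA : ∀ k, S k ⊆ A := fun k => (hSAk k).trans (hAkA (k + 1))
  refine ⟨S, hS, hSA, fun k => (closure_mono (hSAk k)).trans (hAkS (k + 1)),
    (iUnion_subset hSA).antisymm ?_⟩
  exact hAkU ▸ iUnion_mono fun k => subset_closure.trans (hAkS k)

end Exhaustion

namespace Projectivization

open scoped LinearAlgebra.Projectivization

variable {K V : Type*} [DivisionRing K] [AddCommGroup V] [Module K V] [TopologicalSpace V]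

theorem isQuotientMap_mk' : Topology.IsQuotientMap (mk' K : {v : V // v ≠ 0} → ℙ K V) :=
  isQuotientMap_quot_mk

theorem isOpen_setOf_rep_mem {U : Set V} (hU : IsOpen U)
    (hsmul : ∀ v ∈ U, ∀ c : K, c ≠ 0 → c • v ∈ U) : IsOpen {q : ℙ K V | q.rep ∈ U} := by
  rw [← isQuotientMap_mk'.isOpen_preimage]
  convert hU.preimage continuous_subtype_val using 1
  ext ⟨v, hv⟩
  obtain ⟨a, ha⟩ := exists_smul_eq_mk_rep K v hv
  simp only [Set.mem_preimage, Set.mem_ofPred_eq, mk'_eq_mk, ← ha, Units.smul_def]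
  exact ⟨fun h => by simpa [inv_smul_smul₀ a.ne_zero] using hsmul _ h _ (inv_ne_zero a.ne_zero),
    fun h => hsmul v h a a.ne_zero⟩

theorem continuousOn_rep {X : Type*} [TopologicalSpace X] {f : V → X} {U : Set V}
    (hU : IsOpen U) (hsmul : ∀ v ∈ U, ∀ c : K, c ≠ 0 → c • v ∈ U) (hf : ContinuousOn f U)
    (hfsmul : ∀ v ∈ U, ∀ c : K, c ≠ 0 → f (c • v) = f v) :
    ContinuousOn (fun q : ℙ K V => f q.rep) {q | q.rep ∈ U} := by
  refine (continuousOn_open_iff (isOpen_setOf_rep_mem hU hsmul)).2 fun W hW => ?_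
  refine isOpen_setOf_rep_mem (U := U ∩ f ⁻¹' W) (hf.isOpen_inter_preimage hU hW) ?_
  exact fun v hv c hc => ⟨hsmul v hv.1 c hc, by simpa [hfsmul v hv.1 c hc] using hv.2⟩

end Projectivization

section Chart

open Projectivization Matrix

variable {n : ℕ} (g : Matrix.GeneralLinearGroup (Fin (n + 1)) ℝ)

-- In the coordinates `chartCoords g v = g⁻¹ v`, the form `chartLast g` vanishes exactly on the
-- hyperplane at infinity of the chart, and `chartInvVec g = chartInit g / chartLast g` inverts it.
def chartVec (x : Fin n → ℝ) : RV n := (g : Matrix (Fin (n + 1)) (Fin (n + 1)) ℝ) *ᵥ Fin.snoc x 1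

def chartCoords (v : RV n) : RV n := (↑g⁻¹ : Matrix (Fin (n + 1)) (Fin (n + 1)) ℝ) *ᵥ v

def chartLast (v : RV n) : ℝ := chartCoords g v (Fin.last n)

def chartInit (v : RV n) : Fin n → ℝ := Fin.init (chartCoords g v)

def chartInvVec (v : RV n) : Fin n → ℝ := (chartLast g v)⁻¹ • chartInit g v

def chartInv (q : RP n) : Fin n → ℝ := chartInvVec g q.rep

def chartCone : Set (RV n) := {v | chartLast g v ≠ 0}

theorem snoc_smul_add_smul (x y : Fin n → ℝ) (s t : ℝ) :
    (Fin.snoc (s • x + t • y) (s + t) : RV n) = s • Fin.snoc x 1 + t • Fin.snoc y 1 := by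
  ext i
  refine Fin.lastCases ?_ (fun j => ?_) i <;> simp

theorem chartCoords_mulVec (v : RV n) :
    chartCoords g ((g : Matrix (Fin (n + 1)) (Fin (n + 1)) ℝ) *ᵥ v) = v := by
  simp [chartCoords, Matrix.mulVec_mulVec]

theorem mulVec_chartCoords (v : RV n) :
    (g : Matrix (Fin (n + 1)) (Fin (n + 1)) ℝ) *ᵥ chartCoords g v = v := by
  simp [chartCoords, Matrix.mulVec_mulVec]

theorem chartCoords_smul (c : ℝ) (v : RV n) : chartCoords g (c • v) = c • chartCoords g v :=
  Matrix.mulVec_smul _ c v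

theorem chartLast_smul (c : ℝ) (v : RV n) : chartLast g (c • v) = c * chartLast g v := by
  simp [chartLast, chartCoords_smul]

theorem chartInit_smul (c : ℝ) (v : RV n) : chartInit g (c • v) = c • chartInit g v := by
  rw [chartInit, chartCoords_smul]
  rfl

theorem chartLast_chartVec (x : Fin n → ℝ) : chartLast g (chartVec g x) = 1 := by
  simp [chartLast, chartVec, chartCoords_mulVec]

theorem chartInit_chartVec (x : Fin n → ℝ) : chartInit g (chartVec g x) = x := by
  simp [chartInit, chartVec, chartCoords_mulVec]

theorem chartInit_ne_zero {v : RV n} (hv : v ≠ 0) (hl : chartLast g v = 0) : chartInit g v ≠ 0 := by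
  intro hi
  apply hv
  rw [← mulVec_chartCoords g v, ← Fin.snoc_init_self (chartCoords g v)]
  change _ *ᵥ Fin.snoc (chartInit g v) (chartLast g v) = 0
  rw [hi, hl, ← Matrix.mulVec_zero (g : Matrix (Fin (n + 1)) (Fin (n + 1)) ℝ)]
  congr 1
  ext i
  refine Fin.lastCases ?_ (fun j => ?_) i <;> simp

theorem chartInvVec_mulVec_snoc (z : Fin n → ℝ) (d : ℝ) :
    chartInvVec g ((g : Matrix (Fin (n + 1)) (Fin (n + 1)) ℝ) *ᵥ Fin.snoc z d) = d⁻¹ • z := by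
  simp [chartInvVec, chartLast, chartInit, chartCoords_mulVec]

theorem chartInvVec_smul {c : ℝ} (hc : c ≠ 0) (v : RV n) :
    chartInvVec g (c • v) = chartInvVec g v := by
  rw [chartInvVec, chartLast_smul, chartInit_smul, smul_smul, mul_inv, mul_right_comm,
    inv_mul_cancel₀ hc, one_mul, chartInvVec]

theorem chartVec_ne_zero (x : Fin n → ℝ) : chartVec g x ≠ 0 := fun h => by
  simpa [chartVec, chartCoords] using congrArg (fun v => chartCoords g v (Fin.last n)) h

theorem chartMap_eq_mk (x : Fin n → ℝ) :
    chartMap g x = mk ℝ (chartVec g x) (chartVec_ne_zero g x) := rfl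

theorem exists_rep_chartMap (x : Fin n → ℝ) :
    ∃ c : ℝ, c ≠ 0 ∧ (chartMap g x).rep = c • chartVec g x := by
  obtain ⟨a, ha⟩ := exists_smul_eq_mk_rep ℝ (chartVec g x) (chartVec_ne_zero g x)
  exact ⟨a, a.ne_zero, ha.symm⟩

theorem chartInv_chartMap (x : Fin n → ℝ) : chartInv g (chartMap g x) = x := by
  obtain ⟨c, hc, hrep⟩ := exists_rep_chartMap g x
  rw [chartInv, hrep, chartInvVec_smul g hc, chartVec, chartInvVec_mulVec_snoc, inv_one, one_smul]

theorem chartMap_injective : Function.Injective (chartMap g) :=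
  Function.LeftInverse.injective (chartInv_chartMap g)

theorem chartMap_chartInv {q : RP n} (hq : q.rep ∈ chartCone g) :
    chartMap g (chartInv g q) = q := by
  set w := chartCoords g q.rep
  have hq' : w (Fin.last n) ≠ 0 := hq
  have hw : (Fin.snoc (chartInv g q) 1 : RV n) = (w (Fin.last n))⁻¹ • w := by
    ext i
    refine Fin.lastCases ?_ (fun j => ?_) i
    · simp [inv_mul_cancel₀ hq']
    · simp [chartInv, chartInvVec, chartLast, chartInit, w, Fin.init]
  conv_rhs => rw [← mk_rep q]
  rw [chartMap_eq_mk, mk_eq_mk_iff']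
  refine ⟨(w (Fin.last n))⁻¹, ?_⟩
  rw [chartVec, hw, Matrix.mulVec_smul, mulVec_chartCoords]

theorem range_chartMap : Set.range (chartMap g) = {q | q.rep ∈ chartCone g} := by
  refine Set.Subset.antisymm ?_ fun q hq => ⟨_, chartMap_chartInv g hq⟩
  rintro _ ⟨x, rfl⟩
  obtain ⟨c, hc, hrep⟩ := exists_rep_chartMap g x
  simp [chartCone, chartLast, hrep, chartCoords_smul, chartVec, chartCoords_mulVec, hc]

theorem continuous_chartCoords : Continuous (chartCoords g) :=
  continuous_const.matrix_mulVec continuous_id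

theorem continuous_chartLast : Continuous (chartLast g) :=
  (continuous_apply _).comp (continuous_chartCoords g)

theorem continuous_chartInit : Continuous (chartInit g) :=
  continuous_pi fun j => (continuous_apply (Fin.castSucc j)).comp (continuous_chartCoords g)

theorem continuous_chartMap : Continuous (chartMap g) :=
  isQuotientMap_mk'.continuous.comp <|
    (continuous_const.matrix_mulVec (continuous_id.finSnoc continuous_const)).subtype_mk _

theorem smul_mem_chartCone {v : RV n} (hv : v ∈ chartCone g) {c : ℝ} (hc : c ≠ 0) :
    c • v ∈ chartCone g := by
  simpa [chartCone, chartLast_smul, hc] using hv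

theorem isOpen_chartCone : IsOpen (chartCone g) :=
  isOpen_ne_fun (continuous_chartLast g) continuous_const

theorem isOpen_range_chartMap : IsOpen (Set.range (chartMap g)) :=
  range_chartMap g ▸ isOpen_setOf_rep_mem (isOpen_chartCone g) fun _ hv _ hc =>
    smul_mem_chartCone g hv hc

theorem continuousOn_chartInv : ContinuousOn (chartInv g) (Set.range (chartMap g)) := by
  rw [range_chartMap]
  refine continuousOn_rep (isOpen_chartCone g) (fun _ hv _ hc => smul_mem_chartCone g hv hc) ?_
    fun v _ c hc => chartInvVec_smul g hc v
  exact ((continuous_chartLast g).continuousOn.inv₀ fun v hv => hv).smul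
    (continuous_chartInit g).continuousOn

theorem image_chartMap (S : Set (Fin n → ℝ)) :
    chartMap g '' S = Set.range (chartMap g) ∩ chartInv g ⁻¹' S := by
  refine Set.Subset.antisymm ?_ fun q ⟨hq, hqS⟩ => ⟨_, hqS, chartMap_chartInv g ?_⟩
  · rintro _ ⟨x, hx, rfl⟩
    exact ⟨⟨x, rfl⟩, by simpa [chartInv_chartMap] using hx⟩
  · rwa [range_chartMap] at hq

theorem isOpen_image_chartMap {S : Set (Fin n → ℝ)} (hS : IsOpen S) : IsOpen (chartMap g '' S) :=
  image_chartMap g S ▸ (continuousOn_chartInv g).isOpen_inter_preimage (isOpen_range_chartMap g) hS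

/-- Points of `chartMap g '' K` have representatives `v` with `‖chartInit g v‖ ≤ R |chartLast g v|`;
the complement of this cone is a neighbourhood of the hyperplane at infinity. -/
theorem isClosed_image_chartMap {K : Set (Fin n → ℝ)} (hK : IsCompact K) :
    IsClosed (chartMap g '' K) := by
  obtain ⟨R, hR⟩ := hK.isBounded.exists_norm_le
  set U : Set (RV n) := {v | R * |chartLast g v| < ‖chartInit g v‖}
  have hU : IsOpen {q : RP n | q.rep ∈ U} := by
    refine isOpen_setOf_rep_mem (isOpen_lt (continuous_const.mul (continuous_chartLast g).abs)
      (continuous_chartInit g).norm) fun v hv c hc => ?_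
    simp only [U, Set.mem_ofPred_eq, chartLast_smul, chartInit_smul, abs_mul, norm_smul,
      Real.norm_eq_abs] at hv ⊢
    nlinarith [abs_pos.2 hc]
  have hcompl : (chartMap g '' K)ᶜ =
      {q | q.rep ∈ U} ∪ Set.range (chartMap g) ∩ chartInv g ⁻¹' Kᶜ := by
    ext q
    simp only [Set.mem_compl_iff, Set.mem_union, Set.mem_inter_iff, Set.mem_preimage]
    constructor
    · intro hq
      by_cases hr : q ∈ Set.range (chartMap g)
      · exact Or.inr ⟨hr, fun hK => hq ⟨_, hK, chartMap_chartInv g (by rwa [range_chartMap] at hr)⟩⟩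
      · have hl : chartLast g q.rep = 0 := by simpa [range_chartMap, chartCone] using hr
        left
        simpa [U, hl] using chartInit_ne_zero g q.rep_nonzero hl
    · rintro (hU | ⟨-, hK⟩) ⟨x, hx, rfl⟩
      · obtain ⟨c, hc, hrep⟩ := exists_rep_chartMap g x
        simp only [U, Set.mem_ofPred_eq, hrep, chartLast_smul, chartInit_smul, chartLast_chartVec,
          chartInit_chartVec, mul_one, norm_smul, Real.norm_eq_abs] at hU
        nlinarith [hR x hx, abs_nonneg c]
      · exact hK (by rwa [chartInv_chartMap])
  rw [← isOpen_compl_iff, hcompl]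
  exact hU.union ((continuousOn_chartInv g).isOpen_inter_preimage (isOpen_range_chartMap g)
    hK.isClosed.isOpen_compl)

end Chart

section ChartLines

open Projectivization Matrix

variable {n : ℕ} (g : Matrix.GeneralLinearGroup (Fin (n + 1)) ℝ) {x y : Fin n → ℝ}

theorem smul_chartVec_add_smul (s t : ℝ) :
    s • chartVec g x + t • chartVec g y =
      (g : Matrix (Fin (n + 1)) (Fin (n + 1)) ℝ) *ᵥ Fin.snoc (s • x + t • y) (s + t) := by
  rw [snoc_smul_add_smul, mulVec_add, mulVec_smul, mulVec_smul, chartVec, chartVec]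

theorem chartVec_lineMap (t : ℝ) :
    chartVec g (AffineMap.lineMap x y t) = (1 - t) • chartVec g x + t • chartVec g y := by
  rw [smul_chartVec_add_smul, sub_add_cancel, AffineMap.lineMap_apply_module, chartVec]

theorem linearIndependent_chartVec (hxy : x ≠ y) :
    LinearIndependent ℝ ![chartVec g x, chartVec g y] := by
  refine LinearIndependent.pair_iff.2 fun s t hst => ?_
  have h := congrArg (chartCoords g) hst
  rw [smul_chartVec_add_smul, chartCoords_mulVec, chartCoords, mulVec_zero] at h
  obtain rfl : t = -s := by linarith [show s + t = 0 by simpa using congrFun h (Fin.last n)]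
  have hinit : s • x + -s • y = 0 := by
    have := congrArg Fin.init h
    rwa [Fin.init_snoc] at this
  have hs : s = 0 := (smul_eq_zero.1 (show s • (x - y) = 0 by
    rwa [smul_sub, sub_eq_add_neg, ← neg_smul])).resolve_right (sub_ne_zero.2 hxy)
  exact ⟨hs, by simp [hs]⟩

theorem isLineR_span_chartVec (hxy : x ≠ y) :
    isLineR {q : RP n | q.rep ∈ Submodule.span ℝ {chartVec g x, chartVec g y}} :=
  ⟨_, by
    have := finrank_span_eq_card (linearIndependent_chartVec g hxy)
    rw [Matrix.range_cons_cons_empty] at this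
    simpa using this, rfl⟩

theorem rep_chartMap_lineMap_mem (t : ℝ) :
    (chartMap g (AffineMap.lineMap x y t)).rep ∈ Submodule.span ℝ {chartVec g x, chartVec g y} := by
  obtain ⟨c, -, hrep⟩ := exists_rep_chartMap g (AffineMap.lineMap x y t)
  rw [hrep, chartVec_lineMap]
  exact Submodule.smul_mem _ _ (Submodule.mem_span_pair.2 ⟨1 - t, t, rfl⟩)

theorem chartInv_mem_range_lineMap {q : RP n} (hq : q ∈ Set.range (chartMap g))
    (hqL : q.rep ∈ Submodule.span ℝ {chartVec g x, chartVec g y}) :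
    chartInv g q ∈ Set.range (AffineMap.lineMap x y : ℝ → Fin n → ℝ) := by
  obtain ⟨s, t, hst⟩ := Submodule.mem_span_pair.1 hqL
  rw [range_chartMap] at hq
  have hcone : q.rep ∈ chartCone g := hq
  rw [← hst, smul_chartVec_add_smul] at hcone
  have hst0 : s + t ≠ 0 := by simpa [chartCone, chartLast, chartCoords_mulVec] using hcone
  refine ⟨t / (s + t), ?_⟩
  rw [chartInv, ← hst, smul_chartVec_add_smul, chartInvVec_mulVec_snoc,
    AffineMap.lineMap_apply_module]
  ext i
  simp only [Pi.add_apply, Pi.smul_apply, smul_eq_mul]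
  field_simp
  ring

theorem image_chartInv_inter_span_chartVec {D : Set (RP n)} (hD : D ⊆ Set.range (chartMap g)) :
    chartInv g '' (D ∩ {q | q.rep ∈ Submodule.span ℝ {chartVec g x, chartVec g y}}) =
      chartMap g ⁻¹' D ∩ Set.range (AffineMap.lineMap x y : ℝ → Fin n → ℝ) := by
  refine Set.Subset.antisymm ?_ ?_
  · rintro _ ⟨q, ⟨hqD, hqL⟩, rfl⟩
    refine ⟨?_, chartInv_mem_range_lineMap g (hD hqD) hqL⟩
    rwa [Set.mem_preimage, chartMap_chartInv g (by simpa [range_chartMap] using hD hqD)]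
  · rintro _ ⟨hzD, t, rfl⟩
    exact ⟨_, ⟨hzD, rep_chartMap_lineMap_mem g t⟩, chartInv_chartMap g _⟩

theorem convex_preimage_chartMap {D : Set (RP n)}
    (hD : ∀ L, isLineR L → IsPreconnected (D ∩ L)) (hrange : D ⊆ Set.range (chartMap g)) :
    Convex ℝ (chartMap g ⁻¹' D) := by
  refine convex_iff_segment_subset.2 fun x hx y hy => ?_
  rcases eq_or_ne x y with rfl | hxy
  · simpa using hx
  have hP := (hD _ (isLineR_span_chartVec g hxy)).image _
    ((continuousOn_chartInv g).mono (Set.inter_subset_left.trans hrange))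
  rw [image_chartInv_inter_span_chartVec g hrange] at hP
  exact (hP.segment_subset hxy Set.inter_subset_right ⟨hx, 0, by simp⟩ ⟨hy, 1, by simp⟩).trans
    Set.inter_subset_left

end ChartLines

/-- An open properly convex set `D ⊆ ℝℙⁿ` admits an exhaustion by open
sets `D_k` with compact closures `closure (D_k) ⊆ D_{k+1}`, which in an affine chart in
which `D` is bounded are bounded strictly convex open sets with real-analytic boundary. -/
theorem exhaustion_by_strictly_convex_analytic
    (n : ℕ) (D : Set (RP n)) (hD : IsOpen D) (hpc : properlyConvexR D)
    (g : Matrix.GeneralLinearGroup (Fin (n + 1)) ℝ)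
    (hrange : D ⊆ Set.range (chartMap g))
    (hbdd : Bornology.IsBounded (chartMap g ⁻¹' D)) :
    ∃ Dk : ℕ → Set (RP n),
      (∀ k, IsOpen (Dk k)) ∧ (∀ k, Dk k ⊆ D) ∧
      (∀ k, IsCompact (closure (Dk k)) ∧ closure (Dk k) ⊆ Dk (k + 1)) ∧
      (⋃ k, Dk k) = D ∧
      ∀ k, Bornology.IsBounded (chartMap g ⁻¹' Dk k) ∧
        IsOpen (chartMap g ⁻¹' Dk k) ∧ Convex ℝ (chartMap g ⁻¹' Dk k) ∧
        strictlyConvexSet (chartMap g ⁻¹' Dk k) ∧ analyticBoundary (chartMap g ⁻¹' Dk k) := by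
  obtain ⟨S, hS, hSA, hScl, hSU⟩ := exists_exhaustion_isAnalyticStrictlyConvexBody
    (hD.preimage (continuous_chartMap g)) (convex_preimage_chartMap g hpc.1.2 hrange) hbdd
  have hcpt : ∀ k, IsCompact (closure (S k)) := fun k => (hS k).isBounded.isCompact_closure
  have hclosure : ∀ k, closure (chartMap g '' S k) ⊆ chartMap g '' closure (S k) := fun k =>
    closure_minimal (image_mono subset_closure) (isClosed_image_chartMap g (hcpt k))
  refine ⟨fun k => chartMap g '' S k, fun k => isOpen_image_chartMap g (hS k).isOpen,
    fun k => (image_mono (hSA k)).trans (image_preimage_subset _ _), fun k => ⟨?_, ?_⟩, ?_,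
    fun k => ?_⟩
  · exact ((hcpt k).image (continuous_chartMap g)).of_isClosed_subset isClosed_closure
      (hclosure k)
  · exact (hclosure k).trans (image_mono (hScl k))
  · rw [← image_iUnion, hSU, image_preimage_eq_of_subset hrange]
  · rw [(chartMap_injective g).preimage_image]
    exact ⟨(hS k).isBounded, (hS k).isOpen, (hS k).convex, (hS k).strictlyConvex, (hS k).analytic⟩
end
end

section
/- Let D ⊆ ℝℙⁿ be an open convex set, let D̃ be one of the two connected components of π⁻¹(D) ⊆ ℝ^{n+1} (an open convex cone), and let F ⊆ (ℝℙⁿ)* be a compact set whose dual complement is F* = D. For each f ∈ F choose a lift f̃ ∈ (ℝ^{n+1})* \ {0} representing f with f̃ > 0 on D̃, and extend f̃ complex-linearly to (ℂ^{n+1})*. Then the elliptic tube satisfies D^e = {z ∈ ℂℙⁿ : for all f, g ∈ F, Re(f̃(z̃)·conj(g̃(z̃))) > 0 for one (equivalently, every) representative z̃ ∈ ℂ^{n+1}\{0} of z}. -/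
/-!
For `f, g ∈ F` the product `f̃ g̃` has no zero on the cone over `D = F*` and is positive at
`v₀`; since a convex set is connected, it is positive on the whole cone. If `z̃ = c₀ w₀ + c₁ w₁`
with `[w₀, w₁] ⊆ D` and `Re (c₀ c̄₁) ≥ 0`, expanding `f̃(z̃) g̃(z̃)‾` then shows that its real part
is positive: `w₀` and `w₁` lie on the same side of every hyperplane `ker f` (otherwise the
segment would meet it), unless the segment degenerates to a point.

Conversely, if these real parts are positive, the compact set of suitably normalised values
`f̃(z̃)` lies in an open sector of angle less than `π / 2`, so some `u ∈ ℂˣ` rotates it into the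
open first quadrant. Then `x = Re (u z̃)` and `y = Im (u z̃)` satisfy `f̃(x), f̃(y) > 0` for all
`f ∈ F`, so the real segment `[x, y]` lies in `F* = D`, and `z = [x + i y]` lies in its
elliptic tube.
-/

open scoped ComplexConjugate

noncomputable section

abbrev CV (n : ℕ) : Type := Fin (n + 1) → ℂ
abbrev CP (n : ℕ) : Type := Projectivization ℂ (CV n)

/-- Complexification of a real vector. -/
def cplx {n : ℕ} (v : RV n) : CV n := fun i => (v i : ℂ)

/-- The closed (possibly degenerate) projective segment spanned by two lifts. -/
def realSeg {n : ℕ} (v₀ v₁ : RV n) : Set (RP n) :=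
  {x | ∃ c₀ c₁ : ℝ, 0 ≤ c₀ * c₁ ∧ ∃ h : c₀ • v₀ + c₁ • v₁ ≠ 0,
    x = Projectivization.mk ℝ (c₀ • v₀ + c₁ • v₁) h}

/-- The elliptic tube over the closed segment determined by the lifts `v₀ v₁`. -/
def segTube {n : ℕ} (v₀ v₁ : RV n) : Set (CP n) :=
  {z | ∃ c₀ c₁ : ℂ, 0 ≤ (c₀ * conj c₁).re ∧ ∃ h : c₀ • cplx v₀ + c₁ • cplx v₁ ≠ 0,
    z = Projectivization.mk ℂ (c₀ • cplx v₀ + c₁ • cplx v₁) h}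

/-- The elliptic tube over a subset `D` of real projective space: the union of the tubes
over all closed segments contained in `D`. -/
def eTube {n : ℕ} (D : Set (RP n)) : Set (CP n) :=
  ⋃ (v₀ : RV n) (v₁ : RV n) (_ : v₀ ≠ 0) (_ : v₁ ≠ 0) (_ : realSeg v₀ v₁ ⊆ D),
    segTube v₀ v₁

/-- The dual real projective space `(ℝℙⁿ)* = ℙ((ℝ^{n+1})*)`. -/
abbrev RPd (n : ℕ) : Type := Projectivization ℝ (Module.Dual ℝ (RV n))

/-- The standard topology on the dual of `ℝ^{n+1}` (induced by coordinates). -/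
instance dualTopR (n : ℕ) : TopologicalSpace (Module.Dual ℝ (RV n)) :=
  TopologicalSpace.induced (fun f => (fun i => f (Pi.single i 1) : RV n)) inferInstance

/-- The complex-linear extension of a real linear functional on `ℝ^{n+1}`. -/
def extLD {n : ℕ} (f : Module.Dual ℝ (RV n)) : Module.Dual ℂ (CV n) :=
  ∑ i, (f (Pi.single i 1) : ℂ) • (LinearMap.proj i : CV n →ₗ[ℂ] ℂ)

/-- The dual complement of a set `F ⊆ (ℝℙⁿ)*`, identified with a subset of `ℝℙⁿ`:
the set of points whose annihilator misses `F`. -/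
def dualCompF {n : ℕ} (F : Set (RPd n)) : Set (RP n) :=
  {x | ∀ ξ ∈ F, ξ.rep x.rep ≠ 0}


open Complex
open scoped Real

lemma re_mul_conj_pos {α β γ δ : ℝ} (hαβ : 0 < α * β) (hγδ : 0 < γ * δ) (hαγ : 0 < α * γ)
    {a b : ℂ} (hab : 0 ≤ (a * conj b).re) (hne : a ≠ 0 ∨ b ≠ 0) :
    0 < ((a * α + b * β) * conj (a * γ + b * δ)).re := by
  have hexpand : ((a * α + b * β) * conj (a * γ + b * δ)).re =
      normSq a * (α * γ) + normSq b * (β * δ) + (α * δ + β * γ) * (a * conj b).re := by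
    simp only [mul_re, mul_im, add_re, add_im, conj_re, conj_im, ofReal_re, ofReal_im,
      normSq_apply]
    ring
  have hβδ : 0 < β * δ := by nlinarith
  have hαδ : 0 < α * δ := by nlinarith [mul_pos hαγ hγδ, sq_nonneg γ]
  have hβγ : 0 < β * γ := by nlinarith [mul_pos hαβ hαγ, sq_nonneg α]
  have hcross : 0 < α * δ + β * γ := add_pos hαδ hβγ
  rw [hexpand]
  rcases hne with h | h
  · nlinarith [normSq_pos.2 h, normSq_nonneg b]
  · nlinarith [normSq_pos.2 h, normSq_nonneg a]

lemma re_mul_conj_eq_norm_mul_norm_mul_cos (a b : ℂ) :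
    (a * conj b).re = ‖a‖ * ‖b‖ * Real.cos (arg a - arg b) := by
  rw [Real.cos_sub, mul_re, conj_re, conj_im, ← norm_mul_cos_arg a, ← norm_mul_cos_arg b,
    ← norm_mul_sin_arg a, ← norm_mul_sin_arg b]
  ring

lemma arg_sub_arg_lt_pi_div_two {a b : ℂ} (ha : 0 < a.re) (hb : 0 < b.re)
    (hab : 0 < (a * conj b).re) : arg a - arg b < π / 2 := by
  have hba := abs_lt.1 (abs_arg_lt_pi_div_two_iff.2 (Or.inl hb))
  have haa := abs_lt.1 (abs_arg_lt_pi_div_two_iff.2 (Or.inl ha))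
  by_contra! h
  have hcos : Real.cos (arg a - arg b) ≤ 0 := Real.cos_nonpos_of_pi_div_two_le_of_le h (by linarith)
  rw [re_mul_conj_eq_norm_mul_norm_mul_cos] at hab
  exact hab.not_ge (mul_nonpos_of_nonneg_of_nonpos (by positivity) hcos)

lemma exists_rotation_of_arg_mem_Icc {S : Set ℂ} {α β : ℝ} (hαβ : β - α < π / 2)
    (hS : ∀ a ∈ S, a ≠ 0 ∧ arg a ∈ Set.Icc α β) :
    ∃ u : ℂ, u ≠ 0 ∧ ∀ a ∈ S, 0 < (u * a).re ∧ 0 < (u * a).im := by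
  set φ : ℝ := π / 4 - (α + β) / 2 with hφ
  refine ⟨exp (φ * I), exp_ne_zero _, fun a ha => ?_⟩
  obtain ⟨ha0, hα, hβ⟩ := hS a ha
  have hpolar : exp (φ * I) * a = ‖a‖ * exp ((φ + arg a : ℝ) * I) := by
    conv_lhs => rw [← norm_mul_exp_arg_mul_I a]
    rw [mul_left_comm, ← Complex.exp_add]
    push_cast
    ring_nf
  have hna := norm_pos_iff.2 ha0
  rw [hpolar, re_ofReal_mul, im_ofReal_mul, exp_ofReal_mul_I_re, exp_ofReal_mul_I_im]
  exact ⟨mul_pos hna (Real.cos_pos_of_mem_Ioo ⟨by linarith [Real.pi_pos], by linarith⟩),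
    mul_pos hna (Real.sin_pos_of_pos_of_lt_pi (by linarith) (by linarith [Real.pi_pos]))⟩

lemma exists_rotation_of_re_pos {S : Set ℂ} (hSc : IsCompact S) (hSne : S.Nonempty)
    (hre : ∀ a ∈ S, 0 < a.re) (hS : ∀ a ∈ S, ∀ b ∈ S, 0 < (a * conj b).re) :
    ∃ u : ℂ, u ≠ 0 ∧ ∀ a ∈ S, 0 < (u * a).re ∧ 0 < (u * a).im := by
  have hcont : ContinuousOn arg S := fun a ha =>
    (continuousAt_arg (mem_slitPlane_iff.2 (Or.inl (hre a ha)))).continuousWithinAt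
  obtain ⟨aM, haM, hM⟩ := hSc.exists_isMaxOn hSne hcont
  obtain ⟨am, ham, hm⟩ := hSc.exists_isMinOn hSne hcont
  refine exists_rotation_of_arg_mem_Icc
    (arg_sub_arg_lt_pi_div_two (hre aM haM) (hre am ham) (hS aM haM am ham)) fun a ha => ?_
  exact ⟨fun h => by simpa [h] using hre a ha, hm ha, hM ha⟩

lemma exists_rotation {K : Set ℂ} (hKc : IsCompact K)
    (hK : ∀ a ∈ K, ∀ b ∈ K, 0 < (a * conj b).re) :
    ∃ u : ℂ, u ≠ 0 ∧ ∀ a ∈ K, 0 < (u * a).re ∧ 0 < (u * a).im := by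
  rcases K.eq_empty_or_nonempty with rfl | ⟨a₀, ha₀⟩
  · exact ⟨1, one_ne_zero, by simp⟩
  have ha₀ne : a₀ ≠ 0 := fun h => by simpa [h] using hK a₀ ha₀ a₀ ha₀
  have hscale : ∀ a b : ℂ, (a / a₀ * conj (b / a₀)).re = (a * conj b).re / normSq a₀ := by
    intro a b
    rw [map_div₀, div_mul_div_comm, mul_conj, div_ofReal_re]
  have hS : ∀ a ∈ (· / a₀) '' K, ∀ b ∈ (· / a₀) '' K, 0 < (a * conj b).re := by
    rintro _ ⟨a, ha, rfl⟩ _ ⟨b, hb, rfl⟩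
    rw [hscale]
    exact div_pos (hK a ha b hb) (normSq_pos.2 ha₀ne)
  -- dividing by `a₀` moves `K` into the right half-plane, since `1 = a₀ / a₀` is in the image
  have hre : ∀ a ∈ (· / a₀) '' K, 0 < a.re := fun a ha => by
    simpa [div_self ha₀ne] using hS a ha _ ⟨a₀, ha₀, rfl⟩
  obtain ⟨u, hu, hquad⟩ := exists_rotation_of_re_pos (hKc.image (continuous_id.div_const a₀))
    ⟨_, a₀, ha₀, rfl⟩ hre hS
  refine ⟨u / a₀, div_ne_zero hu ha₀ne, fun a ha => ?_⟩
  simpa [mul_div_assoc, div_mul_eq_mul_div] using hquad _ ⟨a, ha, rfl⟩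

lemma re_ofReal_mul_mul_conj (r s : ℝ) (a b : ℂ) :
    (r * a * conj (s * b)).re = r * s * (a * conj b).re := by
  rw [map_mul, conj_ofReal, mul_mul_mul_comm, ← ofReal_mul, re_ofReal_mul]

section Linear

variable {n : ℕ}

lemma dual_apply_eq_sum (f : Module.Dual ℝ (RV n)) (v : RV n) :
    f v = ∑ i, v i * f (Pi.single i 1) := by
  rw [f.pi_apply_eq_sum_univ v]
  congr! with i _ j
  simp [Pi.single_apply, eq_comm]

lemma extLD_apply (f : Module.Dual ℝ (RV n)) (w : CV n) :
    extLD f w = ∑ i, (f (Pi.single i 1) : ℂ) * w i := by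
  simp [extLD]

lemma extLD_smul_left (t : ℝ) (f : Module.Dual ℝ (RV n)) (w : CV n) :
    extLD (t • f) w = t * extLD f w := by
  simp only [extLD_apply, Finset.mul_sum, LinearMap.smul_apply, smul_eq_mul, ofReal_mul, mul_assoc]

lemma extLD_re (f : Module.Dual ℝ (RV n)) (w : CV n) :
    (extLD f w).re = f (fun i => (w i).re) := by
  rw [dual_apply_eq_sum f]
  simp [extLD_apply, mul_comm]

lemma extLD_im (f : Module.Dual ℝ (RV n)) (w : CV n) :
    (extLD f w).im = f (fun i => (w i).im) := by
  rw [dual_apply_eq_sum f]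
  simp [extLD_apply, mul_comm]

lemma extLD_cplx (f : Module.Dual ℝ (RV n)) (v : RV n) : extLD f (cplx v) = f v := by
  apply Complex.ext <;> simp [extLD_re, extLD_im, cplx, ← Pi.zero_def]

lemma cplx_re_add_I_smul_cplx_im (w : CV n) :
    cplx (fun i => (w i).re) + I • cplx (fun i => (w i).im) = w := by
  funext i
  simp [cplx, mul_comm I, re_add_im]

end Linear

section Projective

lemma continuous_projectivization_lift {K V α : Type*} [DivisionRing K] [AddCommGroup V]
    [Module K V] [TopologicalSpace V] [TopologicalSpace α] {f : {v : V // v ≠ 0} → α}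
    (hf : ∀ (a b : {v : V // v ≠ 0}) (t : K), a = t • (b : V) → f a = f b)
    (hc : Continuous f) : Continuous (Projectivization.lift f hf) :=
  hc.quotient_lift _

lemma rep_apply_rep_ne_zero_iff {K V : Type*} [Field K] [AddCommGroup V] [Module K V]
    {φ : Module.Dual K V} (hφ : φ ≠ 0) {v : V} (hv : v ≠ 0) :
    (Projectivization.mk K φ hφ).rep (Projectivization.mk K v hv).rep ≠ 0 ↔ φ v ≠ 0 := by
  obtain ⟨a, ha⟩ := Projectivization.exists_smul_eq_mk_rep K φ hφ
  obtain ⟨b, hb⟩ := Projectivization.exists_smul_eq_mk_rep K v hv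
  simp [← ha, ← hb, Units.smul_def]

variable {n : ℕ}

def LiftsOn (F : Set (RPd n)) (lift : RPd n → Module.Dual ℝ (RV n)) : Prop :=
  ∀ f ∈ F, ∃ h : lift f ≠ 0, Projectivization.mk ℝ (lift f) h = f

lemma mk_mem_dualCompF_iff {F : Set (RPd n)} {lift : RPd n → Module.Dual ℝ (RV n)}
    (hlift : LiftsOn F lift) {v : RV n} (hv : v ≠ 0) :
    Projectivization.mk ℝ v hv ∈ dualCompF F ↔ ∀ f ∈ F, lift f v ≠ 0 := by
  refine forall₂_congr fun f hf => ?_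
  obtain ⟨h, hmk⟩ := hlift f hf
  conv_lhs => rw [← hmk]
  exact rep_apply_rep_ne_zero_iff h hv

lemma convexR.isPreconnected {D : Set (RP n)} (hD : convexR D) : IsPreconnected D := by
  refine isPreconnected_of_forall_pair fun x hx y hy => ?_
  rcases eq_or_ne x y with rfl | hxy
  · exact ⟨{x}, by simpa using hx, rfl, rfl, isPreconnected_singleton⟩
  have hind : LinearIndependent ℝ ![x.rep, y.rep] := by
    have hrep : Projectivization.rep ∘ ![x, y] = ![x.rep, y.rep] := by
      ext i
      fin_cases i <;> rfl
    rw [← hrep, ← Projectivization.independent_iff]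
    exact (Projectivization.independent_pair_iff_ne x y).2 hxy
  set W := Submodule.span ℝ (Set.range ![x.rep, y.rep])
  have hW : Module.finrank ℝ W = 2 := by simpa using finrank_span_eq_card hind
  exact ⟨D ∩ {p | p.rep ∈ W}, Set.inter_subset_left,
    ⟨hx, Submodule.subset_span ⟨0, rfl⟩⟩, ⟨hy, Submodule.subset_span ⟨1, rfl⟩⟩,
    hD.2 _ ⟨W, hW, rfl⟩⟩

lemma mul_pos_of_isPreconnected {D : Set (RP n)} (hD : IsPreconnected D)
    {φ ψ : Module.Dual ℝ (RV n)}
    (hne : ∀ v (hv : v ≠ 0), Projectivization.mk ℝ v hv ∈ D → φ v * ψ v ≠ 0)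
    {v₀ : RV n} (hv₀ : v₀ ≠ 0) (hv₀D : Projectivization.mk ℝ v₀ hv₀ ∈ D)
    (hpos : 0 < φ v₀ * ψ v₀) {v : RV n} (hv : v ≠ 0) (hvD : Projectivization.mk ℝ v hv ∈ D) :
    0 < φ v * ψ v := by
  let q : RP n → ℝ := Projectivization.lift (fun v => φ v * ψ v / ‖(v : RV n)‖ ^ 2) (by
    rintro ⟨-, ha⟩ ⟨b, -⟩ t rfl
    have ht : t ≠ 0 := left_ne_zero_of_smul ha
    simp only [map_smul, smul_eq_mul, norm_smul, Real.norm_eq_abs, mul_pow, sq_abs]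
    field_simp)
  have hq : ∀ v hv, q (Projectivization.mk ℝ v hv) = φ v * ψ v / ‖v‖ ^ 2 := fun _ _ => rfl
  have hqc : Continuous q := continuous_projectivization_lift _ <| by
    have := φ.continuous_of_finiteDimensional
    have := ψ.continuous_of_finiteDimensional
    exact Continuous.div (by fun_prop) (by fun_prop) fun v => by simpa using v.2
  by_contra! hle
  obtain ⟨x, hxD, hx0⟩ := hD.intermediate_value hvD hv₀D hqc.continuousOn
    (show (0 : ℝ) ∈ Set.Icc _ _ from
      ⟨by rw [hq]; exact div_nonpos_of_nonpos_of_nonneg hle (by positivity),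
        by rw [hq]; positivity⟩)
  rw [← Projectivization.mk_rep x] at hxD hx0
  rw [hq, div_eq_zero_iff] at hx0
  exact hne _ _ hxD (hx0.resolve_right (by simpa using x.rep_nonzero))

end Projective

section Forward

variable {n : ℕ}

def PairwisePosRe (F : Set (RPd n)) (lift : RPd n → Module.Dual ℝ (RV n)) (w : CV n) : Prop :=
  ∀ f ∈ F, ∀ g ∈ F, 0 < (extLD (lift f) w * conj (extLD (lift g) w)).re

lemma re_extLD_smul_mul_conj (φ ψ : Module.Dual ℝ (RV n)) (μ : ℂ) (w : CV n) :
    (extLD φ (μ • w) * conj (extLD ψ (μ • w))).re =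
      normSq μ * (extLD φ w * conj (extLD ψ w)).re := by
  rw [map_smul, map_smul, smul_eq_mul, smul_eq_mul, map_mul, mul_mul_mul_comm, mul_conj,
    re_ofReal_mul]

lemma mk_mem_realSeg_left {x : RV n} (hx : x ≠ 0) (y : RV n) :
    Projectivization.mk ℝ x hx ∈ realSeg x y :=
  ⟨1, 0, by simp, by simpa using hx, by congr 1; simp⟩

lemma segTube_smul_right_subset (x : RV n) (t : ℝ) : segTube x (t • x) ⊆ segTube x x := by
  rintro _ ⟨c₀, c₁, -, hne, rfl⟩
  have hvec : c₀ • cplx x + c₁ • cplx (t • x) = (c₀ + c₁ * t) • cplx x + (0 : ℂ) • cplx x := by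
    funext i
    simp only [Pi.add_apply, Pi.smul_apply, cplx, smul_eq_mul, ofReal_mul, zero_smul,
      Pi.zero_apply, add_zero]
    ring
  exact ⟨c₀ + c₁ * t, 0, by simp, hvec ▸ hne, by congr 1⟩

lemma sameSide_or_eq_smul {F : Set (RPd n)} {lift : RPd n → Module.Dual ℝ (RV n)}
    (hlift : LiftsOn F lift) {x y : RV n} (hx : x ≠ 0) (hseg : realSeg x y ⊆ dualCompF F) :
    (∀ f ∈ F, 0 < lift f x * lift f y) ∨ ∃ t : ℝ, y = t • x := by
  by_contra! h
  obtain ⟨⟨f, hf, hle⟩, hdep⟩ := h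
  have hα : lift f x ≠ 0 :=
    (mk_mem_dualCompF_iff hlift hx).1 (hseg (mk_mem_realSeg_left hx y)) f hf
  -- `f` vanishes at this point of the segment, so it must be the zero vector
  have hp : lift f y • x + (-lift f x) • y ≠ 0 := by
    intro h0
    refine hdep (lift f y / lift f x) ?_
    rw [div_eq_inv_mul, mul_smul, eq_inv_smul_iff₀ hα]
    rw [neg_smul, ← sub_eq_add_neg, sub_eq_zero] at h0
    exact h0.symm
  refine (mk_mem_dualCompF_iff hlift hp).1 (hseg ⟨_, _, by nlinarith, hp, rfl⟩) f hf ?_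
  simp only [map_add, map_smul, smul_eq_mul]
  ring

lemma pairwisePosRe_rep_of_mem_segTube {F : Set (RPd n)} {lift : RPd n → Module.Dual ℝ (RV n)}
    {x y : RV n} (hside : ∀ f ∈ F, 0 < lift f x * lift f y)
    (hsign : ∀ f ∈ F, ∀ g ∈ F, 0 < lift f x * lift g x) {z : CP n} (hz : z ∈ segTube x y) :
    PairwisePosRe F lift z.rep := by
  obtain ⟨c₀, c₁, hc, hw, rfl⟩ := hz
  intro f hf g hg
  obtain ⟨μ, hμ⟩ := Projectivization.exists_smul_eq_mk_rep ℂ _ hw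
  rw [← hμ, Units.smul_def, re_extLD_smul_mul_conj]
  refine mul_pos (normSq_pos.2 μ.ne_zero) ?_
  have hext : ∀ φ, extLD φ (c₀ • cplx x + c₁ • cplx y) = c₀ * φ x + c₁ * φ y := by
    simp [extLD_cplx]
  rw [hext, hext]
  refine re_mul_conj_pos (hside f hf) (hside g hg) (hsign f hf g hg) hc ?_
  by_contra! h0
  simp [h0] at hw

lemma pairwisePosRe_rep_of_mem_eTube {F : Set (RPd n)} {lift : RPd n → Module.Dual ℝ (RV n)}
    (hlift : LiftsOn F lift)
    (hsign : ∀ v (hv : v ≠ 0), Projectivization.mk ℝ v hv ∈ dualCompF F →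
      ∀ f ∈ F, ∀ g ∈ F, 0 < lift f v * lift g v)
    {z : CP n} (hz : z ∈ eTube (dualCompF F)) :
    PairwisePosRe F lift z.rep := by
  simp only [eTube, Set.mem_iUnion] at hz
  obtain ⟨x, y, hx, -, hseg, hz⟩ := hz
  have hsignx := hsign x hx (hseg (mk_mem_realSeg_left hx y))
  rcases sameSide_or_eq_smul hlift hx hseg with hside | ⟨t, rfl⟩
  · exact pairwisePosRe_rep_of_mem_segTube hside hsignx hz
  · exact pairwisePosRe_rep_of_mem_segTube (fun f hf => hsignx f hf f hf) hsignx
      (segTube_smul_right_subset x t hz)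

end Forward

section Backward

variable {n : ℕ}

def dualCoords (g : Module.Dual ℝ (RV n)) : RV n := fun i => g (Pi.single i 1)

@[fun_prop]
lemma continuous_dualCoords : Continuous (dualCoords (n := n)) := continuous_induced_dom

lemma dualCoords_ne_zero {g : Module.Dual ℝ (RV n)} (hg : g ≠ 0) : dualCoords g ≠ 0 := by
  refine fun h => hg (LinearMap.ext fun v => ?_)
  have hcoord : ∀ i, g (Pi.single i 1) = 0 := fun i => congrFun h i
  simp [dual_apply_eq_sum g v, hcoord]

/-- The factor `g v₀ / ‖g‖²` makes `extLD g w` invariant under `g ↦ t • g`, so that it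
descends to `(ℝℙⁿ)*`, and turns it into a positive multiple of `extLD (lift f) w` whenever
`lift f v₀ > 0`. -/
def normalizedPairing (w : CV n) (v₀ : RV n) : RPd n → ℂ :=
  Projectivization.lift
    (fun g => ((g.1 v₀ / ‖dualCoords g.1‖ ^ 2 : ℝ) : ℂ) * extLD g.1 w) (by
      rintro ⟨-, hb⟩ ⟨g, -⟩ t rfl
      have ht : t ≠ 0 := left_ne_zero_of_smul hb
      have hcoords : dualCoords (t • g) = t • dualCoords g := rfl
      simp only [hcoords, norm_smul, LinearMap.smul_apply, extLD_smul_left, smul_eq_mul,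
        Real.norm_eq_abs, mul_pow, sq_abs]
      have htC : (t : ℂ) ≠ 0 := ofReal_ne_zero.2 ht
      push_cast
      field_simp)

lemma continuous_normalizedPairing (w : CV n) (v₀ : RV n) :
    Continuous (normalizedPairing w v₀) := by
  refine continuous_projectivization_lift _ ?_
  have happly : ∀ g : Module.Dual ℝ (RV n), g v₀ = ∑ i, v₀ i * dualCoords g i :=
    fun g => dual_apply_eq_sum g v₀
  have hext : ∀ g : Module.Dual ℝ (RV n), extLD g w = ∑ i, (dualCoords g i : ℂ) * w i :=
    fun g => extLD_apply g w
  simp only [happly, hext]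
  exact Continuous.mul (continuous_ofReal.comp (Continuous.div (by fun_prop) (by fun_prop)
    fun g => pow_ne_zero 2 (norm_ne_zero_iff.2 (dualCoords_ne_zero g.2)))) (by fun_prop)

lemma exists_rotation_extLD {F : Set (RPd n)} (hFc : IsCompact F)
    {lift : RPd n → Module.Dual ℝ (RV n)} (hlift : LiftsOn F lift) {v₀ : RV n}
    (hpos : ∀ f ∈ F, 0 < lift f v₀) {w : CV n} (hw : PairwisePosRe F lift w) :
    ∃ u : ℂ, u ≠ 0 ∧ ∀ f ∈ F, 0 < (u * extLD (lift f) w).re ∧ 0 < (u * extLD (lift f) w).im := by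
  have hΦ : ∀ f ∈ F, ∃ r : ℝ, 0 < r ∧ normalizedPairing w v₀ f = r * extLD (lift f) w := by
    intro f hf
    obtain ⟨h, hmk⟩ := hlift f hf
    refine ⟨_, div_pos (hpos f hf) (pow_pos (norm_pos_iff.2 (dualCoords_ne_zero h)) 2), ?_⟩
    conv_lhs => rw [← hmk]
    rfl
  obtain ⟨u, hu, hquad⟩ := exists_rotation (hFc.image (continuous_normalizedPairing w v₀)) <| by
    rintro _ ⟨f, hf, rfl⟩ _ ⟨g, hg, rfl⟩
    obtain ⟨r, hr, hrf⟩ := hΦ f hf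
    obtain ⟨s, hs, hsg⟩ := hΦ g hg
    rw [hrf, hsg, re_ofReal_mul_mul_conj]
    exact mul_pos (mul_pos hr hs) (hw f hf g hg)
  refine ⟨u, hu, fun f hf => ?_⟩
  obtain ⟨r, hr, hrf⟩ := hΦ f hf
  have h := hquad _ ⟨f, hf, rfl⟩
  rw [hrf, mul_left_comm, re_ofReal_mul, im_ofReal_mul] at h
  exact ⟨pos_of_mul_pos_right h.1 hr.le, pos_of_mul_pos_right h.2 hr.le⟩

lemma realSeg_subset_dualCompF {F : Set (RPd n)} {lift : RPd n → Module.Dual ℝ (RV n)}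
    (hlift : LiftsOn F lift) {x y : RV n} (hxy : ∀ f ∈ F, 0 < lift f x ∧ 0 < lift f y) :
    realSeg x y ⊆ dualCompF F := by
  rintro _ ⟨c₀, c₁, hc, hne, rfl⟩
  refine (mk_mem_dualCompF_iff hlift hne).2 fun f hf h0 => ?_
  obtain ⟨hx, hy⟩ := hxy f hf
  simp only [map_add, map_smul, smul_eq_mul] at h0
  have hc' : c₀ ≠ 0 ∨ c₁ ≠ 0 := by
    by_contra! h
    simp [h] at hne
  rcases hc' with h | h
  · have : c₀ * (c₀ * lift f x + c₁ * lift f y) = 0 := by rw [h0, mul_zero]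
    nlinarith [mul_pos (sq_pos_of_ne_zero h) hx, mul_nonneg hc hy.le]
  · have : c₁ * (c₀ * lift f x + c₁ * lift f y) = 0 := by rw [h0, mul_zero]
    nlinarith [mul_pos (sq_pos_of_ne_zero h) hy, mul_nonneg hc hx.le]

lemma mk_mem_eTube {D : Set (RP n)} {x y : RV n} (hseg : realSeg x y ⊆ D) {a b : ℂ}
    (hab : 0 ≤ (a * conj b).re) (hw : a • cplx x + b • cplx y ≠ 0) :
    Projectivization.mk ℂ _ hw ∈ eTube D := by
  simp only [eTube, Set.mem_iUnion]
  have hcplx0 : cplx (0 : RV n) = 0 := funext fun _ => ofReal_zero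
  -- `eTube` only uses segments with nonzero ends: a zero end is replaced by the other one
  by_cases hx : x = 0
  · subst hx
    have hw' : (0 : ℂ) • cplx y + b • cplx y ≠ 0 := by simpa [hcplx0] using hw
    have hy : y ≠ 0 := by rintro rfl; simp [hcplx0] at hw
    refine ⟨y, y, hy, hy, fun p hp => hseg ?_, 0, b, by simp, hw', by congr 1; simp [hcplx0]⟩
    obtain ⟨c₀, c₁, -, hne, rfl⟩ := hp
    exact ⟨0, c₀ + c₁, by simp, by simpa [add_smul] using hne, by congr 1; simp [add_smul]⟩
  by_cases hy : y = 0
  · subst hy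
    have hw' : a • cplx x + (0 : ℂ) • cplx x ≠ 0 := by simpa [hcplx0] using hw
    refine ⟨x, x, hx, hx, fun p hp => hseg ?_, a, 0, by simp, hw', by congr 1; simp [hcplx0]⟩
    obtain ⟨c₀, c₁, -, hne, rfl⟩ := hp
    exact ⟨c₀ + c₁, 0, by simp, by simpa [add_smul] using hne, by congr 1; simp [add_smul]⟩
  exact ⟨x, y, hx, hy, hseg, a, b, hab, hw, rfl⟩

lemma mem_eTube_of_pairwisePosRe {F : Set (RPd n)} (hFc : IsCompact F)
    {lift : RPd n → Module.Dual ℝ (RV n)} (hlift : LiftsOn F lift) {v₀ : RV n}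
    (hpos : ∀ f ∈ F, 0 < lift f v₀) {z : CP n} (hz : PairwisePosRe F lift z.rep) :
    z ∈ eTube (dualCompF F) := by
  obtain ⟨u, hu, hquad⟩ := exists_rotation_extLD hFc hlift hpos hz
  set w := u • z.rep
  have hw : (1 : ℂ) • cplx (fun i => (w i).re) + I • cplx (fun i => (w i).im) = w := by
    rw [one_smul, cplx_re_add_I_smul_cplx_im]
  have hne : (1 : ℂ) • cplx (fun i => (w i).re) + I • cplx (fun i => (w i).im) ≠ 0 := by
    rw [hw]
    exact smul_ne_zero hu z.rep_nonzero
  have hz : z = Projectivization.mk ℂ _ hne := by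
    conv_lhs => rw [← z.mk_rep]
    exact (Projectivization.mk_eq_mk_iff' ℂ _ _ z.rep_nonzero hne).2 ⟨u⁻¹, by
      rw [hw, smul_smul, inv_mul_cancel₀ hu, one_smul]⟩
  rw [hz]
  refine mk_mem_eTube (realSeg_subset_dualCompF hlift fun f hf => ?_) (by simp) hne
  rw [← extLD_re, ← extLD_im, map_smul, smul_eq_mul]
  exact hquad f hf

end Backward

theorem eTube_eq_positivity_description_general
    (n : ℕ) (D : Set (RP n)) (hDc : convexR D)
    (Dt : Set (RV n)) (v₀ : RV n)
    (hv₀ : v₀ ∈ {v : RV n | ∃ h : v ≠ 0, Projectivization.mk ℝ v h ∈ D})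
    (hDt : Dt = connectedComponentIn {v : RV n | ∃ h : v ≠ 0, Projectivization.mk ℝ v h ∈ D} v₀)
    (F : Set (RPd n)) (hFc : IsCompact F) (hFd : dualCompF F = D)
    (lift : RPd n → Module.Dual ℝ (RV n))
    (hlift : ∀ f ∈ F, ∃ h : lift f ≠ 0, Projectivization.mk ℝ (lift f) h = f)
    (hpos : ∀ f ∈ F, ∀ v ∈ Dt, 0 < lift f v) :
    eTube D = {z : CP n | ∀ f ∈ F, ∀ g ∈ F,
      0 < (extLD (lift f) z.rep * conj (extLD (lift g) z.rep)).re} := by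
  subst hFd hDt
  have hpos₀ : ∀ f ∈ F, 0 < lift f v₀ := fun f hf => hpos f hf v₀ (mem_connectedComponentIn hv₀)
  obtain ⟨hv₀ne, hv₀D⟩ := hv₀
  have hsign : ∀ v (hv : v ≠ 0), Projectivization.mk ℝ v hv ∈ dualCompF F →
      ∀ f ∈ F, ∀ g ∈ F, 0 < lift f v * lift g v := fun v hv hvD f hf g hg =>
    mul_pos_of_isPreconnected hDc.isPreconnected
      (fun w hw hwD => mul_ne_zero ((mk_mem_dualCompF_iff hlift hw).1 hwD f hf)
        ((mk_mem_dualCompF_iff hlift hw).1 hwD g hg))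
      hv₀ne hv₀D (mul_pos (hpos₀ f hf) (hpos₀ g hg)) hv hvD
  ext z
  exact ⟨pairwisePosRe_rep_of_mem_eTube hlift hsign, mem_eTube_of_pairwisePosRe hFc hlift hpos₀⟩

/-- Lempert's description of the elliptic tube: if `D ⊆ ℝℙⁿ` is open and
convex, `D̃` is one of the two components of `π⁻¹(D)`, `F ⊆ (ℝℙⁿ)*` is compact with
`F* = D`, and each `f ∈ F` is lifted to a functional `f̃` positive on `D̃`, then
`D^e = {z ∈ ℂℙⁿ : ∀ f, g ∈ F, Re (f̃(z̃) conj (g̃(z̃))) > 0}`. -/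
theorem eTube_eq_positivity_description
    (n : ℕ) (D : Set (RP n)) (hDo : IsOpen D) (hDc : convexR D)
    (Dt : Set (RV n)) (v₀ : RV n)
    (hv₀ : v₀ ∈ {v : RV n | ∃ h : v ≠ 0, Projectivization.mk ℝ v h ∈ D})
    (hDt : Dt = connectedComponentIn {v : RV n | ∃ h : v ≠ 0, Projectivization.mk ℝ v h ∈ D} v₀)
    (F : Set (RPd n)) (hFc : IsCompact F) (hFd : dualCompF F = D)
    (lift : RPd n → Module.Dual ℝ (RV n))
    (hlift : ∀ f ∈ F, ∃ h : lift f ≠ 0, Projectivization.mk ℝ (lift f) h = f)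
    (hpos : ∀ f ∈ F, ∀ v ∈ Dt, 0 < lift f v) :
    eTube D = {z : CP n | ∀ f ∈ F, ∀ g ∈ F,
      0 < (extLD (lift f) z.rep * conj (extLD (lift g) z.rep)).re} :=
  eTube_eq_positivity_description_general n D hDc Dt v₀ hv₀ hDt F hFc hFd lift hlift hpos
end
end

section
/- Let D ⊆ ℝⁿ be a bounded convex open set, arising as a properly convex open subset of ℝℙⁿ in an affine chart, and suppose ∂D is of class C^k for some k ∈ ℕ ∪ {∞} with k ≥ 1. Then the function p(x+iy) = inf{t > 0 : x + t⁻¹y ∈ D} is of class C^k on the set {x+iy : x ∈ D, y ∈ ℝⁿ, y ≠ 0}. -/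
/-! Write `z = x + iy`. Then `p(z)` is the gauge at `y` of `D` translated so that `x` is the
origin, and `x + p(z)⁻¹ y` is the point where the ray from `x` in direction `y` leaves `D`.
Convexity forces this ray to cross `∂D` transversally, so for a local defining function `f` of
`∂D` the equation `f (x + t⁻¹ y) = 0` has nonzero `t`-derivative at `t = p(z)`. The implicit
function theorem then gives a `C^k` solution `t(x, y)`, and it coincides with `p` near `z`. -/

open scoped ComplexConjugate

noncomputable section

abbrev Rn (n : ℕ) : Type := Fin n → ℝ
abbrev Cn (n : ℕ) : Type := Fin n → ℂ

/-- The inclusion `ℝⁿ ⊆ ℂⁿ`. -/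
def ιC {n : ℕ} (x : Rn n) : Cn n := fun i => (x i : ℂ)

/-- The real part of a point of `ℂⁿ`. -/
def rePart {n : ℕ} (z : Cn n) : Rn n := fun i => (z i).re

/-- The imaginary part of a point of `ℂⁿ`. -/
def imPart {n : ℕ} (z : Cn n) : Rn n := fun i => (z i).im

/-- Lempert's function `p(x+iy) = inf {t > 0 : x + t⁻¹ y ∈ D}` on `D ⊕ iℝⁿ`. -/
def pfun {n : ℕ} (D : Set (Rn n)) (z : Cn n) : ℝ :=
  sInf {t : ℝ | 0 < t ∧ rePart z + t⁻¹ • imPart z ∈ D}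

/-- The elliptic tube over the closed affine segment `[x, y] ⊆ ℝⁿ`, written in the affine
chart `ℂⁿ ⊆ ℂℙⁿ`: the closed disk with diameter `[x, y]`. -/
def affSegTube {n : ℕ} (x y : Rn n) : Set (Cn n) :=
  {z | ∃ c₀ c₁ : ℂ, 0 ≤ (c₀ * conj c₁).re ∧ ∃ _ : c₀ + c₁ ≠ 0,
    z = (c₀ + c₁)⁻¹ • (c₀ • ιC x + c₁ • ιC y)}

/-- The elliptic tube `D^e` of `D ⊆ ℝⁿ`, in the affine chart `ℂⁿ ⊆ ℂℙⁿ`. -/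
def affTube {n : ℕ} (D : Set (Rn n)) : Set (Cn n) :=
  ⋃ (x : Rn n) (y : Rn n) (_ : segment ℝ x y ⊆ D), affSegTube x y

/-- The boundary of `D ⊆ ℝⁿ` is of class `C^k`: near every boundary point it is the zero
set of a `C^k` function with nonvanishing gradient. -/
def boundaryCk {n : ℕ} (k : ℕ∞) (D : Set (Rn n)) : Prop :=
  ∀ h ∈ frontier D, ∃ (U : Set (Rn n)) (f : Rn n → ℝ),
    IsOpen U ∧ h ∈ U ∧ ContDiffOn ℝ k f U ∧
    frontier D ∩ U = {x ∈ U | f x = 0} ∧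
    ∀ x ∈ frontier D ∩ U, fderiv ℝ f x ≠ 0

open Filter Topology Set

theorem mem_frontier_iff_of_frontier_inter {X : Type*} [TopologicalSpace X] {D U : Set X}
    {f : X → ℝ} {p : X} (hDU : frontier D ∩ U = {x ∈ U | f x = 0})
    (hp : p ∈ U) : p ∈ frontier D ↔ f p = 0 := by
  have := Set.ext_iff.mp hDU p
  simpa only [mem_inter_iff, mem_ofPred_eq, hp, and_true, true_and] using this

section Transversality

variable {E : Type*} [NormedAddCommGroup E] [NormedSpace ℝ E]

theorem HasFDerivAt.eventually_pos_of_apply_pos {f : E → ℝ} {ℓ : E →L[ℝ] ℝ} {h v : E}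
    (hf : HasFDerivAt f ℓ h) (hfh : f h = 0) (hv : 0 < ℓ v) :
    ∀ᶠ s in 𝓝[>] (0 : ℝ), 0 < f (h + s • v) := by
  have hline : HasDerivAt (fun s : ℝ => f (h + s • v)) (ℓ v) 0 := by
    have hv : HasDerivAt (fun s : ℝ => h + s • v) v 0 := by
      simpa using ((hasDerivAt_id (0 : ℝ)).smul_const v).const_add h
    exact hf.comp_hasDerivAt_of_eq 0 hv (by simp)
  filter_upwards [nhdsGT_le_nhdsNE 0
      ((hasDerivAt_iff_tendsto_slope.mp hline).eventually (eventually_gt_nhds hv)),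
    self_mem_nhdsWithin] with s hslope hs
  exact pos_of_slope_pos hs hslope (by simpa using hfh)

theorem ContinuousLinearMap.exists_apply_pos_and_add_mem_and_sub_mem {ℓ : E →L[ℝ] ℝ}
    (hℓ : ℓ ≠ 0) {S : Set E} {x : E} (hS : S ∈ 𝓝 x) : ∃ e, 0 < ℓ e ∧ x + e ∈ S ∧ x - e ∈ S := by
  obtain ⟨v, hv⟩ : ∃ v, 0 < ℓ v := by
    obtain ⟨v, hv⟩ := DFunLike.ne_iff.mp hℓ
    rcases (show ℓ v ≠ 0 from hv).lt_or_gt with hneg | hpos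
    · exact ⟨-v, by simpa using hneg⟩
    · exact ⟨v, hpos⟩
  have hnear (c : ℝ) : ∀ᶠ s in 𝓝[>] (0 : ℝ), x + (c * s) • v ∈ S :=
    nhdsWithin_le_nhds <| (Continuous.tendsto' (by fun_prop) 0 x (by simp)) hS
  obtain ⟨s, ⟨hs₁, hs₂⟩, hs⟩ := ((hnear 1).and (hnear (-1))).and self_mem_nhdsWithin |>.exists
  refine ⟨s • v, by simpa using mul_pos hs hv, by simpa using hs₁, ?_⟩
  simpa [sub_eq_add_neg, ← neg_smul] using hs₂

/-- If `ℓ (h - x) = 0`, then for small `s > 0` the interior points `h + s • (x ± e - h)`, where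
`ℓ e > 0`, have values of `f` of opposite signs, so `f` vanishes on the segment joining them. -/
theorem Convex.apply_sub_ne_zero_of_hasFDerivAt {D U : Set E} {f : E → ℝ} {ℓ : E →L[ℝ] ℝ}
    {x h : E} (hDc : Convex ℝ D) (hx : x ∈ interior D) (hh : h ∈ closure D) (hU : U ∈ 𝓝 h)
    (hfU : ContinuousOn f U) (hfD : ∀ p ∈ D ∩ U, f p ≠ 0) (hf : HasFDerivAt f ℓ h)
    (hfh : f h = 0) (hℓ : ℓ ≠ 0) : ℓ (h - x) ≠ 0 := by
  intro hℓx
  obtain ⟨e, he, hxe⟩ :=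
    ℓ.exists_apply_pos_and_add_mem_and_sub_mem hℓ (isOpen_interior.mem_nhds hx)
  have hdir (a : E) : ℓ (x + a - h) = ℓ a := by
    rw [show x + a - h = a - (h - x) by abel, map_sub, hℓx, sub_zero]
  obtain ⟨ε, hε, hball⟩ := Metric.mem_nhds_iff.mp hU
  have hnear (a : E) : ∀ᶠ s in 𝓝[>] (0 : ℝ), h + s • (x + a - h) ∈ Metric.ball h ε :=
    nhdsWithin_le_nhds
      ((Continuous.tendsto' (by fun_prop) 0 h (by simp)) (Metric.ball_mem_nhds h hε))
  obtain ⟨s, ⟨⟨⟨hpos, hneg⟩, hpε, hqε⟩, hs₀, hs₁⟩⟩ :=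
    (((hf.eventually_pos_of_apply_pos hfh (v := x + e - h) (by rwa [hdir])).and
      (hf.neg.eventually_pos_of_apply_pos (by simp [hfh]) (v := x + -e - h)
        (by simpa [hdir] using he))).and
      ((hnear e).and (hnear (-e)))).and (Ioo_mem_nhdsGT one_pos) |>.exists
  set p := h + s • (x + e - h)
  set q := h + s • (x + -e - h)
  have hinterior (a : E) (ha : x + a ∈ interior D) : h + s • (x + a - h) ∈ interior D :=
    hDc.add_smul_sub_mem_interior' hh ha ⟨hs₀, hs₁.le⟩
  have hseg : segment ℝ p q ⊆ D ∩ U := fun c hc =>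
    ⟨interior_subset (hDc.interior.segment_subset (hinterior e hxe.1)
        (hinterior (-e) (by simpa [sub_eq_add_neg] using hxe.2)) hc),
      hball ((convex_ball h ε).segment_subset hpε hqε hc)⟩
  obtain ⟨c, hc, hfc⟩ := (convex_segment p q).isPreconnected.intermediate_value
    (right_mem_segment ℝ p q) (left_mem_segment ℝ p q) (hfU.mono fun c hc => (hseg hc).2)
    ⟨by simpa using hneg.le, hpos.le⟩
  exact hfD c (hseg hc) hfc

theorem apply_ne_zero_of_mem_frontier {D U : Set E} {f : E → ℝ} {x₀ y₀ : E} {t₀ : ℝ}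
    (hDo : IsOpen D) (hDc : Convex ℝ D) (hx₀ : x₀ ∈ D) (hfr : x₀ + t₀⁻¹ • y₀ ∈ frontier D)
    (hU : U ∈ 𝓝 (x₀ + t₀⁻¹ • y₀))
    (hf : ContinuousOn f U) (hDU : frontier D ∩ U = {x ∈ U | f x = 0}) {ℓ : E →L[ℝ] ℝ}
    (hℓ : HasFDerivAt f ℓ (x₀ + t₀⁻¹ • y₀)) (hℓ₀ : ℓ ≠ 0) : ℓ y₀ ≠ 0 := by
  have htrans := hDc.apply_sub_ne_zero_of_hasFDerivAt (hDo.interior_eq.symm ▸ hx₀)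
    (frontier_subset_closure hfr) hU hf
    (fun p ⟨hpD, hpU⟩ hp =>
      (hDo.frontier_eq ▸ (mem_frontier_iff_of_frontier_inter hDU hpU).mpr hp).2 hpD)
    hℓ ((mem_frontier_iff_of_frontier_inter hDU (mem_of_mem_nhds hU)).mp hfr) hℓ₀
  rw [add_sub_cancel_left, map_smul, smul_eq_mul] at htrans
  exact right_ne_zero_of_mul htrans

end Transversality

theorem preimage_const_add_mem_nhds_zero {G : Type*} [TopologicalSpace G] [AddZeroClass G]
    [ContinuousAdd G] {D : Set G} {x : G} (hDo : IsOpen D) (hx : x ∈ D) :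
    (x + ·) ⁻¹' D ∈ 𝓝 0 :=
  (continuous_const_add x).continuousAt.preimage_mem_nhds (by simpa using hDo.mem_nhds hx)

section GaugeOfTranslate

variable {E : Type*} [NormedAddCommGroup E] [NormedSpace ℝ E] {D : Set E} {x y : E}

theorem gauge_preimage_add_pos (hDo : IsOpen D) (hDb : Bornology.IsBounded D) (hx : x ∈ D)
    (hy : y ≠ 0) : 0 < gauge ((x + ·) ⁻¹' D) y := by
  have hbdd : Bornology.IsBounded ((x + ·) ⁻¹' D) :=
    (isometry_add_left x).antilipschitz.isBounded_preimage hDb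
  exact (gauge_pos (absorbent_nhds_zero (preimage_const_add_mem_nhds_zero hDo hx))
    (NormedSpace.isVonNBounded_iff ℝ |>.mpr hbdd)).mpr hy

theorem gauge_preimage_add_eq_iff_mem_frontier (hDo : IsOpen D) (hDc : Convex ℝ D) (hx : x ∈ D)
    {t : ℝ} (ht : 0 < t) : gauge ((x + ·) ⁻¹' D) y = t ↔ x + t⁻¹ • y ∈ frontier D := by
  have hfr : x + t⁻¹ • y ∈ frontier D ↔ t⁻¹ • y ∈ frontier ((x + ·) ⁻¹' D) := by
    rw [show (x + ·) ⁻¹' D = Homeomorph.addLeft x ⁻¹' D from rfl, ← Homeomorph.preimage_frontier]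
    rfl
  rw [hfr, ← gauge_eq_one_iff_mem_frontier (hDc.translate_preimage_right x)
      (preimage_const_add_mem_nhds_zero hDo hx),
    gauge_smul_of_nonneg (inv_nonneg.mpr ht.le), smul_eq_mul, inv_mul_eq_one₀ ht.ne', eq_comm]

end GaugeOfTranslate

theorem ContinuousLinearMap.isInvertible_of_apply_one_ne_zero {𝕜 : Type*}
    [NontriviallyNormedField 𝕜] {g : 𝕜 →L[𝕜] 𝕜} (hg : g 1 ≠ 0) : g.IsInvertible := by
  refine .of_inverse (g := (g 1)⁻¹ • .id 𝕜 𝕜) ?_ ?_ <;>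
  · ext
    simpa using inv_mul_cancel₀ hg

section ImplicitGauge

variable {E : Type*} [NormedAddCommGroup E] [NormedSpace ℝ E] [CompleteSpace E] {D U : Set E}
  {f : E → ℝ} {x₀ y₀ : E} {t₀ : ℝ}

theorem contDiffAt_gauge_preimage_add (hDo : IsOpen D) (hDc : Convex ℝ D) (hx₀ : x₀ ∈ D)
    (ht₀ : 0 < t₀) (hfr : x₀ + t₀⁻¹ • y₀ ∈ frontier D) {k : ℕ∞} (hk : 1 ≤ k)
    (hU : U ∈ 𝓝 (x₀ + t₀⁻¹ • y₀)) (hf : ContDiffOn ℝ k f U)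
    (hDU : frontier D ∩ U = {x ∈ U | f x = 0}) (hf' : fderiv ℝ f (x₀ + t₀⁻¹ • y₀) ≠ 0) :
    ContDiffAt ℝ k (fun w : E × E => gauge ((w.1 + ·) ⁻¹' D) w.2) (x₀, y₀) := by
  set h₀ := x₀ + t₀⁻¹ • y₀
  set ℓ := fderiv ℝ f h₀
  have hk₀ : (k : WithTop ℕ∞) ≠ 0 := by exact_mod_cast (zero_lt_one.trans_le hk).ne'
  have hfh₀ : ContDiffAt ℝ k f h₀ := hf.contDiffAt hU
  have hℓ : HasFDerivAt f ℓ h₀ := (hfh₀.differentiableAt hk₀).hasFDerivAt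
  have htrans : ℓ y₀ ≠ 0 :=
    apply_ne_zero_of_mem_frontier hDo hDc hx₀ hfr hU hf.continuousOn hDU hℓ hf'
  set F : (E × E) × ℝ → ℝ := fun u => f (u.1.1 + u.2⁻¹ • u.1.2)
  have hF : ContDiffAt ℝ k F ((x₀, y₀), t₀) := by
    have : ContDiffAt ℝ k (fun u : (E × E) × ℝ => u.2⁻¹) ((x₀, y₀), t₀) :=
      contDiffAt_snd.inv ht₀.ne'
    exact hfh₀.comp ((x₀, y₀), t₀) (by fun_prop)
  have hFt : fderiv ℝ F ((x₀, y₀), t₀) (0, 1) = -(t₀ ^ 2)⁻¹ * ℓ y₀ := by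
    have hline : HasDerivAt (fun t : ℝ => ((x₀, y₀), t)) ((0 : E × E), (1 : ℝ)) t₀ :=
      (hasDerivAt_const t₀ (x₀, y₀)).prodMk (hasDerivAt_id t₀)
    have hray : HasDerivAt (fun t : ℝ => x₀ + t⁻¹ • y₀) ((-(t₀ ^ 2)⁻¹) • y₀) t₀ :=
      ((hasDerivAt_inv ht₀.ne').smul_const y₀).const_add x₀
    refine ((hF.differentiableAt hk₀).hasFDerivAt.comp_hasDerivAt t₀ hline).unique ?_
    convert hℓ.comp_hasDerivAt t₀ hray using 1
    exacts [rfl, by rw [map_smul, smul_eq_mul]]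
  have hinv : (fderiv ℝ F ((x₀, y₀), t₀) ∘L .inr ℝ (E × E) ℝ).IsInvertible :=
    ContinuousLinearMap.isInvertible_of_apply_one_ne_zero (by
      simpa [hFt] using mul_ne_zero (by positivity) htrans)
  set φ := hF.implicitFunction hk₀ hinv
  have hφ₀ : φ (x₀, y₀) = t₀ := hF.implicitFunction_apply_self hk₀ hinv
  have hφ : ContinuousAt φ (x₀, y₀) := (hF.contDiffAt_implicitFunction hk₀ hinv).continuousAt
  have hpos : ∀ᶠ w in 𝓝 (x₀, y₀), 0 < φ w := hφ.eventually (lt_mem_nhds (hφ₀ ▸ ht₀))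
  have hmemU : ∀ᶠ w in 𝓝 (x₀, y₀), w.1 + (φ w)⁻¹ • w.2 ∈ U := by
    have : ContinuousAt (fun w : E × E => w.1 + (φ w)⁻¹ • w.2) (x₀, y₀) :=
      continuousAt_fst.add ((hφ.inv₀ (hφ₀ ▸ ht₀.ne')).smul continuousAt_snd)
    exact this.preimage_mem_nhds (by simpa [hφ₀] using hU)
  refine (hF.contDiffAt_implicitFunction hk₀ hinv).congr_of_eventuallyEq ?_
  filter_upwards [hF.eventually_apply_implicitFunction hk₀ hinv, hpos, hmemU,
    continuousAt_fst.preimage_mem_nhds (hDo.mem_nhds hx₀)] with w hFw hwpos hwU hwD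
  exact (gauge_preimage_add_eq_iff_mem_frontier hDo hDc hwD hwpos).mpr
    ((mem_frontier_iff_of_frontier_inter hDU hwU).mpr
      (hFw.trans ((mem_frontier_iff_of_frontier_inter hDU (mem_of_mem_nhds hU)).mp hfr)))

end ImplicitGauge

theorem pfun_eq_gauge {n : ℕ} (D : Set (Rn n)) (z : Cn n) :
    pfun D z = gauge ((rePart z + ·) ⁻¹' D) (imPart z) := by
  rw [gauge_def, pfun]
  congr 1
  ext t
  refine and_congr_right fun ht => ?_
  rw [Set.mem_smul_set_iff_inv_smul_mem₀ (ne_of_gt ht)]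
  rfl

theorem contDiff_rePart_imPart {n : ℕ} {k : WithTop ℕ∞} :
    ContDiff ℝ k fun z : Cn n => (rePart z, imPart z) := by
  refine .prodMk (contDiff_pi.mpr fun i => ?_) (contDiff_pi.mpr fun i => ?_)
  · exact Complex.reCLM.contDiff.comp (contDiff_apply ℝ ℂ i)
  · exact Complex.imCLM.contDiff.comp (contDiff_apply ℝ ℂ i)

theorem pfun_contDiffOn_general
    (n : ℕ) (D : Set (Rn n)) (hDo : IsOpen D) (hDconv : Convex ℝ D)
    (hDb : Bornology.IsBounded D)
    (k : ℕ∞) (hk : 1 ≤ k) (hbd : boundaryCk k D) :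
    ContDiffOn ℝ k (pfun D) {z : Cn n | rePart z ∈ D ∧ imPart z ≠ 0} := by
  rintro z ⟨hx, hy⟩
  set t := gauge ((rePart z + ·) ⁻¹' D) (imPart z)
  have ht : 0 < t := gauge_preimage_add_pos hDo hDb hx hy
  have hfr : rePart z + t⁻¹ • imPart z ∈ frontier D :=
    (gauge_preimage_add_eq_iff_mem_frontier hDo hDconv hx ht).mp rfl
  obtain ⟨U, f, hU, hhU, hf, hDU, hf'⟩ := hbd _ hfr
  have hgauge := contDiffAt_gauge_preimage_add hDo hDconv hx ht hfr hk (hU.mem_nhds hhU) hf hDU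
    (hf' _ ⟨hfr, hhU⟩)
  have hpfun : pfun D = (fun w : Rn n × Rn n => gauge ((w.1 + ·) ⁻¹' D) w.2) ∘
      fun z : Cn n => (rePart z, imPart z) := funext (pfun_eq_gauge D)
  rw [hpfun]
  exact (hgauge.comp z contDiff_rePart_imPart.contDiffAt).contDiffWithinAt

/-- If `D ⊆ ℝⁿ` is a bounded convex open set (a properly convex open set
in an affine chart of `ℝℙⁿ`) with boundary of class `C^k`, `k ∈ ℕ ∪ {∞}`, `k ≥ 1`, then
`p(x+iy) = inf {t > 0 : x + t⁻¹ y ∈ D}` is of class `C^k` on `{x+iy : x ∈ D, y ≠ 0}`. -/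
theorem pfun_contDiffOn
    (n : ℕ) (D : Set (Rn n)) (hDo : IsOpen D) (hDconv : Convex ℝ D)
    (hDb : Bornology.IsBounded D) (hDne : D.Nonempty)
    (k : ℕ∞) (hk : 1 ≤ k) (hbd : boundaryCk k D) :
    ContDiffOn ℝ k (pfun D) {z : Cn n | rePart z ∈ D ∧ imPart z ≠ 0} :=
  pfun_contDiffOn_general n D hDo hDconv hDb k hk hbd
end
end

section
/- Let a < b be real numbers and regard the segment [a,b] ⊆ ℝ ⊆ ℂ, where ℂ is the standard affine chart of ℂℙ¹. Then the elliptic tube of the closed segment [a,b], identified with its image in ℂ, equals the closed disk with diameter [a,b]: [a,b]^e = {z ∈ ℂ : Re((z−a)·conj(b−z)) ≥ 0} = {z ∈ ℂ : |z − (a+b)/2| ≤ (b−a)/2}; and the elliptic tube of the open segment (a,b) equals the corresponding open disk {z ∈ ℂ : |z − (a+b)/2| < (b−a)/2}. -/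
open scoped ComplexConjugate

noncomputable section

/-- The open projective segment spanned by two lifts. -/
def openRealSeg {n : ℕ} (v₀ v₁ : RV n) : Set (RP n) :=
  {x | ∃ c₀ c₁ : ℝ, 0 < c₀ * c₁ ∧ ∃ h : c₀ • v₀ + c₁ • v₁ ≠ 0,
    x = Projectivization.mk ℝ (c₀ • v₀ + c₁ • v₁) h}

/-- The elliptic tube over the open segment determined by the lifts `v₀ v₁`. -/
def openSegTube {n : ℕ} (v₀ v₁ : RV n) : Set (CP n) :=
  {z | ∃ c₀ c₁ : ℂ, 0 < (c₀ * conj c₁).re ∧ ∃ h : c₀ • cplx v₀ + c₁ • cplx v₁ ≠ 0,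
    z = Projectivization.mk ℂ (c₀ • cplx v₀ + c₁ • cplx v₁) h}

/-- The standard affine chart `ℝ ⊆ ℝℙ¹`. -/
def chartR (x : ℝ) : RP 1 :=
  Projectivization.mk ℝ ![x, 1] (by
    intro h
    have := congrFun h 1
    simp at this)

/-- The standard affine chart `ℂ ⊆ ℂℙ¹`. -/
def chartC (z : ℂ) : CP 1 :=
  Projectivization.mk ℂ ![z, 1] (by
    intro h
    have := congrFun h 1
    simp at this)

/-!
Write `wedge u v = u₀ v₁ - u₁ v₀` and, for lifts `v₀, v₁`, consider the Hermitian form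
`segForm v₀ v₁ x = Re (wedge x v₁ · conj (wedge v₀ x))`. At `x = c₀ v₀ + c₁ v₁` it equals
`|wedge v₀ v₁|² Re (c₀ conj c₁)`, so the segment and the elliptic tube spanned by `v₀, v₁` are
its sign sets, in `ℝℙ¹` and in `ℂℙ¹` respectively. On `ℝ²` this form changes sign exactly on the
lines `ℝ v₀` and `ℝ v₁`; hence the segment determines its lifts up to a swap and a rescaling by
factors with positive product, which multiplies the form by a positive constant and so leaves the
tube unchanged. For the lifts `(a, 1), (b, 1)` the form at `(z, 1)` is
`Re ((z - a) conj (b - z)) = ((b - a) / 2)² - |z - (a + b) / 2|²`.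
-/

open Projectivization
open scoped LinearAlgebra.Projectivization

section Wedge

variable {K : Type*} [Field K]

def wedge (u v : Fin 2 → K) : K := u 0 * v 1 - u 1 * v 0

lemma wedge_swap (u v : Fin 2 → K) : wedge v u = -wedge u v := by
  simp only [wedge]; ring

lemma wedge_add_left (u u' v : Fin 2 → K) : wedge (u + u') v = wedge u v + wedge u' v := by
  simp only [wedge, Pi.add_apply]; ring

lemma wedge_add_right (u v v' : Fin 2 → K) : wedge u (v + v') = wedge u v + wedge u v' := by
  simp only [wedge, Pi.add_apply]; ring

lemma wedge_smul_eq_add (v₀ v₁ x : Fin 2 → K) :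
    wedge v₀ v₁ • x = wedge x v₁ • v₀ + wedge v₀ x • v₁ := by
  ext i; fin_cases i <;> simp only [wedge, Fin.isValue, Fin.zero_eta, Fin.mk_one, Pi.smul_apply,
    smul_eq_mul, Pi.add_apply] <;> ring

lemma wedge_add_smul_add_smul (c₀ c₁ d₀ d₁ : K) (v₀ v₁ : Fin 2 → K) :
    wedge (c₀ • v₀ + c₁ • v₁) (d₀ • v₀ + d₁ • v₁) = (c₀ * d₁ - c₁ * d₀) * wedge v₀ v₁ := by
  simp only [wedge, Pi.add_apply, Pi.smul_apply, smul_eq_mul]; ring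

lemma mk_eq_mk_iff_wedge_eq_zero {x y : Fin 2 → K} (hx : x ≠ 0) (hy : y ≠ 0) :
    mk K x hx = mk K y hy ↔ wedge x y = 0 := by
  rw [mk_eq_mk_iff']
  constructor
  · rintro ⟨c, rfl⟩
    simp only [wedge, Pi.smul_apply, smul_eq_mul]; ring
  · intro h
    obtain ⟨i, hi⟩ := Function.ne_iff.mp hy
    refine ⟨x i / y i, ?_⟩
    ext j
    fin_cases i <;> fin_cases j <;> simp [wedge] at h hi ⊢ <;> field_simp
    all_goals first | linear_combination h | linear_combination -h

end Wedge

-- Abstracts `(0 ≤ ·)` and `(0 < ·)`, the conditions cutting out closed and open segments.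
structure IsSignCondition (P : ℝ → Prop) : Prop where
  mul_iff : ∀ t > 0, ∀ r, P (t * r) ↔ P r
  one : P 1
  not_neg_one : ¬ P (-1)

lemma IsSignCondition.of_pos {P : ℝ → Prop} (hP : IsSignCondition P) {r : ℝ} (hr : 0 < r) :
    P r := by
  simpa using (hP.mul_iff r hr 1).mpr hP.one

lemma IsSignCondition.not_of_neg {P : ℝ → Prop} (hP : IsSignCondition P) {r : ℝ} (hr : r < 0) :
    ¬ P r := by
  simpa using (hP.mul_iff (-r) (neg_pos.mpr hr) (-1)).not.mpr hP.not_neg_one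

lemma isSignCondition_nonneg : IsSignCondition (0 ≤ ·) :=
  ⟨fun _ ht _ => mul_nonneg_iff_of_pos_left ht, zero_le_one, by norm_num⟩

lemma isSignCondition_pos : IsSignCondition (0 < ·) :=
  ⟨fun _ ht _ => mul_pos_iff_of_pos_left ht, zero_lt_one, by norm_num⟩

section RCLike

open RCLike

variable {𝕜 : Type*} [RCLike 𝕜]

def segForm (v₀ v₁ x : Fin 2 → 𝕜) : ℝ := re (wedge x v₁ * conj (wedge v₀ x))

lemma segForm_smul (v₀ v₁ x : Fin 2 → 𝕜) (c : 𝕜) :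
    segForm v₀ v₁ (c • x) = ‖c‖ ^ 2 * segForm v₀ v₁ x := by
  have : wedge (c • x) v₁ * conj (wedge v₀ (c • x)) =
      (c * conj c) * (wedge x v₁ * conj (wedge v₀ x)) := by
    simp only [wedge, Pi.smul_apply, smul_eq_mul, map_sub, map_mul]; ring
  rw [segForm, this, mul_conj, ← ofReal_pow, re_ofReal_mul, segForm]

lemma segForm_add_smul_add_smul (v₀ v₁ : Fin 2 → 𝕜) (c₀ c₁ : 𝕜) :
    segForm v₀ v₁ (c₀ • v₀ + c₁ • v₁) = ‖wedge v₀ v₁‖ ^ 2 * re (c₀ * conj c₁) := by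
  have : wedge (c₀ • v₀ + c₁ • v₁) v₁ * conj (wedge v₀ (c₀ • v₀ + c₁ • v₁)) =
      (wedge v₀ v₁ * conj (wedge v₀ v₁)) * (c₀ * conj c₁) := by
    simp only [wedge, Pi.add_apply, Pi.smul_apply, smul_eq_mul, map_sub, map_mul, map_add]; ring
  rw [segForm, this, mul_conj, ← ofReal_pow, re_ofReal_mul]

lemma segForm_comm (v₀ v₁ x : Fin 2 → 𝕜) : segForm v₁ v₀ x = segForm v₀ v₁ x := by
  rw [segForm, segForm, ← conj_re (_ * _)]
  congr 1
  simp only [wedge, map_sub, map_mul, conj_conj]; ring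

lemma segForm_ofReal_smul_ofReal_smul (v₀ v₁ x : Fin 2 → 𝕜) (l₀ l₁ : ℝ) :
    segForm ((l₀ : 𝕜) • v₀) ((l₁ : 𝕜) • v₁) x = l₀ * l₁ * segForm v₀ v₁ x := by
  have : wedge x ((l₁ : 𝕜) • v₁) * conj (wedge ((l₀ : 𝕜) • v₀) x) =
      ((l₀ * l₁ : ℝ) : 𝕜) * (wedge x v₁ * conj (wedge v₀ x)) := by
    simp only [wedge, Pi.smul_apply, smul_eq_mul, map_sub, map_mul, conj_ofReal]; ring
  rw [segForm, this, re_ofReal_mul, segForm]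

def signSeg (P : ℝ → Prop) (v₀ v₁ : Fin 2 → 𝕜) : Set (ℙ 𝕜 (Fin 2 → 𝕜)) :=
  {p | ∃ c₀ c₁ : 𝕜, P (re (c₀ * conj c₁)) ∧ ∃ h : c₀ • v₀ + c₁ • v₁ ≠ 0,
    p = mk 𝕜 (c₀ • v₀ + c₁ • v₁) h}

variable {P : ℝ → Prop} {v₀ v₁ w₀ w₁ : Fin 2 → 𝕜}

lemma mk_mem_signSeg_iff (hP : ∀ t > 0, ∀ r, P (t * r) ↔ P r) (hv : wedge v₀ v₁ ≠ 0)
    {x : Fin 2 → 𝕜} (hx : x ≠ 0) : mk 𝕜 x hx ∈ signSeg P v₀ v₁ ↔ P (segForm v₀ v₁ x) := by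
  constructor
  · rintro ⟨c₀, c₁, hc, hne, hxc⟩
    obtain ⟨a, rfl⟩ := (mk_eq_mk_iff' 𝕜 _ _ hx hne).mp hxc
    have ha : a ≠ 0 := by rintro rfl; simp at hx
    rw [segForm_smul, segForm_add_smul_add_smul, ← mul_assoc, hP _ (by positivity)]
    exact hc
  · intro hx'
    have hcomb := wedge_smul_eq_add v₀ v₁ x
    refine ⟨wedge x v₁, wedge v₀ x, hx', hcomb ▸ smul_ne_zero hv hx, ?_⟩
    rw [mk_eq_mk_iff']
    exact ⟨(wedge v₀ v₁)⁻¹, by rw [← hcomb, inv_smul_smul₀ hv]⟩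

lemma signSeg_subsingleton (hv : wedge v₀ v₁ = 0) : (signSeg P v₀ v₁).Subsingleton := by
  rintro _ ⟨c₀, c₁, -, hc, rfl⟩ _ ⟨d₀, d₁, -, hd, rfl⟩
  rw [mk_eq_mk_iff_wedge_eq_zero, wedge_add_smul_add_smul, hv, mul_zero]

lemma signSeg_nontrivial (hP : IsSignCondition P) (hv : wedge v₀ v₁ ≠ 0) :
    (signSeg P v₀ v₁).Nontrivial := by
  have hne (c : ℝ) : (1 : 𝕜) • v₀ + (c : 𝕜) • v₁ ≠ 0 := fun h => hv <| by
    have := wedge_add_smul_add_smul 1 (c : 𝕜) 0 1 v₀ v₁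
    rw [h] at this
    simpa [wedge] using this.symm
  have mem (c : ℝ) (hc : 0 < c) : mk 𝕜 _ (hne c) ∈ signSeg P v₀ v₁ :=
    ⟨1, c, by simpa using hP.of_pos hc, hne c, rfl⟩
  refine ⟨_, mem 1 one_pos, _, mem 2 two_pos, ?_⟩
  rw [Ne, mk_eq_mk_iff_wedge_eq_zero, wedge_add_smul_add_smul]
  norm_num [hv, ofReal_ofNat]

lemma segForm_mul_nonneg_of_signSeg_eq (hP : IsSignCondition P) (hv : wedge v₀ v₁ ≠ 0)
    (hw : wedge w₀ w₁ ≠ 0) (h : signSeg P v₀ v₁ = signSeg P w₀ w₁) (x : Fin 2 → 𝕜) :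
    0 ≤ segForm v₀ v₁ x * segForm w₀ w₁ x := by
  by_cases hx : x = 0
  · simp [hx, segForm, wedge]
  have key : P (segForm v₀ v₁ x) ↔ P (segForm w₀ w₁ x) := by
    rw [← mk_mem_signSeg_iff hP.mul_iff hv hx, ← mk_mem_signSeg_iff hP.mul_iff hw hx, h]
  rcases lt_trichotomy (segForm v₀ v₁ x) 0 with hneg | hzero | hpos
  · refine mul_nonneg_of_nonpos_of_nonpos hneg.le (not_lt.mp fun hw' => ?_)
    exact hP.not_of_neg hneg (key.mpr (hP.of_pos hw'))
  · rw [hzero, zero_mul]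
  · refine mul_nonneg hpos.le (not_lt.mp fun hw' => ?_)
    exact hP.not_of_neg hw' (key.mp (hP.of_pos hpos))

lemma wedge_ne_zero_of_signSeg_eq (hP : IsSignCondition P) (hw : wedge w₀ w₁ ≠ 0)
    (h : signSeg P v₀ v₁ = signSeg P w₀ w₁) : wedge v₀ v₁ ≠ 0 := fun hv =>
  (signSeg_subsingleton hv).not_nontrivial (h ▸ signSeg_nontrivial hP hw)

lemma vecCons_one_ne_zero (t : 𝕜) : ![t, 1] ≠ 0 := fun h => by simpa using congrFun h 1

def affineChart (t : 𝕜) : ℙ 𝕜 (Fin 2 → 𝕜) := mk 𝕜 ![t, 1] (vecCons_one_ne_zero t)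

lemma mk_mem_image_affineChart_iff {x : Fin 2 → 𝕜} (hx : x ≠ 0) (S : Set 𝕜) :
    mk 𝕜 x hx ∈ affineChart '' S ↔ x 1 ≠ 0 ∧ x 0 / x 1 ∈ S := by
  constructor
  · rintro ⟨t, ht, h⟩
    obtain ⟨c, rfl⟩ := (mk_eq_mk_iff' 𝕜 _ _ hx _).mp h.symm
    have hc : c ≠ 0 := by rintro rfl; simp at hx
    simpa [hc] using ht
  · rintro ⟨h1, hS⟩
    refine ⟨_, hS, (mk_eq_mk_iff' 𝕜 _ _ _ hx).mpr ⟨(x 1)⁻¹, ?_⟩⟩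
    ext i; fin_cases i <;> simp [h1, div_eq_inv_mul]

lemma segForm_vecCons_one (a b t : 𝕜) :
    segForm ![a, 1] ![b, 1] ![t, 1] = re ((t - a) * conj (b - t)) := by
  rw [segForm, ← conj_re]
  congr 1
  simp only [wedge, Matrix.cons_val_zero, Matrix.cons_val_one, Matrix.cons_val_fin_one,
    mul_one, one_mul, map_sub, map_mul, conj_conj]
  ring

lemma signSeg_vecCons_one (hP : IsSignCondition P) {a b : 𝕜} (hab : a ≠ b) :
    signSeg P ![a, 1] ![b, 1] = affineChart '' {t | P (re ((t - a) * conj (b - t)))} := by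
  ext p
  induction p using Projectivization.ind with | h x hx => ?_
  rw [mk_mem_signSeg_iff hP.mul_iff (by simpa [wedge, sub_eq_zero] using hab),
    mk_mem_image_affineChart_iff]
  by_cases h1 : x 1 = 0
  · have h0 : x 0 ≠ 0 := fun h0 => hx (by ext i; fin_cases i <;> simp [h0, h1])
    simp only [h1, ne_eq, not_true_eq_false, false_and, iff_false]
    refine hP.not_of_neg ?_
    simp [segForm, wedge, h1, mul_conj, h0]
  · have hx' : x = x 1 • ![x 0 / x 1, 1] := by
      ext i; fin_cases i <;> simp [mul_div_cancel₀ _ h1]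
    conv_lhs => rw [hx', segForm_smul, hP.mul_iff _ (by positivity), segForm_vecCons_one]
    simp only [ne_eq, h1, not_false_eq_true, true_and, Set.mem_ofPred_eq]

end RCLike

section Classification

open Filter Topology

lemma Continuous.eq_zero_of_forall_mul_nonneg {g : ℝ → ℝ} (hg : Continuous g)
    (h : ∀ t, 0 ≤ t * g t) : g 0 = 0 := by
  have hlim (s : Set ℝ) : Tendsto g (𝓝[s] 0) (𝓝 (g 0)) :=
    hg.continuousAt.mono_left nhdsWithin_le_nhds
  refine le_antisymm (le_of_tendsto (hlim (Set.Iio 0)) ?_) (ge_of_tendsto (hlim (Set.Ioi 0)) ?_)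
  · exact eventually_nhdsWithin_of_forall fun t ht => nonpos_of_mul_nonneg_right (h t) ht
  · exact eventually_nhdsWithin_of_forall fun t ht => nonneg_of_mul_nonneg_right (h t) ht

variable {v₀ v₁ w₀ w₁ : Fin 2 → ℝ}

lemma segForm_real (v₀ v₁ x : Fin 2 → ℝ) : segForm v₀ v₁ x = wedge x v₁ * wedge v₀ x := by
  rfl

lemma segForm_left_eq_zero_of_mul_nonneg (hv : wedge v₀ v₁ ≠ 0)
    (h : ∀ x, 0 ≤ segForm v₀ v₁ x * segForm w₀ w₁ x) : segForm w₀ w₁ v₀ = 0 := by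
  have hg : Continuous fun t : ℝ => segForm w₀ w₁ (v₀ + t • v₁) := by
    simp only [segForm_real, wedge, Pi.add_apply, Pi.smul_apply, smul_eq_mul]
    fun_prop
  -- along `t ↦ v₀ + t • v₁` the `v`-form is `t * wedge v₀ v₁ ^ 2`, which changes sign at `0`
  simpa using hg.eq_zero_of_forall_mul_nonneg fun t => by
    have hD : 0 < wedge v₀ v₁ ^ 2 := by positivity
    have e : segForm v₀ v₁ (v₀ + t • v₁) = wedge v₀ v₁ ^ 2 * t := by
      simp only [segForm_real, wedge, Pi.add_apply, Pi.smul_apply, smul_eq_mul]; ring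
    have := h (v₀ + t • v₁)
    rw [e, mul_assoc] at this
    exact nonneg_of_mul_nonneg_right this hD

lemma segForm_add_nonneg_of_mul_nonneg (hv : wedge v₀ v₁ ≠ 0)
    (h : ∀ x, 0 ≤ segForm v₀ v₁ x * segForm w₀ w₁ x) : 0 ≤ segForm w₀ w₁ (v₀ + v₁) := by
  have hpos : 0 < segForm v₀ v₁ (v₀ + v₁) := by
    have : segForm v₀ v₁ (v₀ + v₁) = wedge v₀ v₁ ^ 2 := by
      simp only [segForm_real, wedge, Pi.add_apply]; ring
    rw [this]
    positivity
  exact nonneg_of_mul_nonneg_right (h (v₀ + v₁)) hpos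

theorem exists_smul_eq_of_segForm_mul_nonneg (hv : wedge v₀ v₁ ≠ 0) (hw : wedge w₀ w₁ ≠ 0)
    (h : ∀ x, 0 ≤ segForm v₀ v₁ x * segForm w₀ w₁ x) :
    ∃ l₀ l₁ : ℝ, 0 < l₀ * l₁ ∧ (v₀ = l₀ • w₀ ∧ v₁ = l₁ • w₁ ∨ v₀ = l₀ • w₁ ∧ v₁ = l₁ • w₀) := by
  have hv₀ : wedge v₀ w₁ * wedge w₀ v₀ = 0 := by
    simpa [segForm_real] using segForm_left_eq_zero_of_mul_nonneg hv h
  wlog hv₀w₁ : wedge v₀ w₁ = 0 generalizing w₀ w₁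
  · have hv₀w₀ : wedge v₀ w₀ = 0 := by
      rw [wedge_swap, (mul_eq_zero.mp hv₀).resolve_left hv₀w₁, neg_zero]
    obtain ⟨l₀, l₁, hl, hl'⟩ := this (by rwa [wedge_swap, neg_ne_zero])
      (by simpa only [segForm_comm w₁ w₀] using h) (by rw [hv₀w₀, zero_mul]) hv₀w₀
    exact ⟨l₀, l₁, hl, hl'.symm⟩
  have hv₁ : wedge v₁ w₁ * wedge w₀ v₁ = 0 := by
    have hv' : wedge v₁ v₀ ≠ 0 := by rwa [wedge_swap, neg_ne_zero]
    simpa [segForm_real] using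
      segForm_left_eq_zero_of_mul_nonneg hv' (by simpa only [segForm_comm v₁ v₀] using h)
  have hnonneg : 0 ≤ wedge w₀ v₀ * wedge v₁ w₁ := by
    have := segForm_add_nonneg_of_mul_nonneg hv h
    rw [segForm_real, wedge_add_left, wedge_add_right, hv₀w₁, zero_add] at this
    linarith
  have hplucker : wedge w₀ v₀ * wedge v₁ w₁ - wedge v₀ w₁ * wedge w₀ v₁ =
      -(wedge w₀ w₁ * wedge v₀ v₁) := by
    simp only [wedge]; ring
  rw [hv₀w₁, zero_mul, sub_zero] at hplucker
  have hpos : 0 < wedge w₀ v₀ * wedge v₁ w₁ :=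
    hnonneg.lt_of_ne fun h0 => mul_ne_zero hw hv (by linarith)
  have hw₀v₁ : wedge w₀ v₁ = 0 :=
    (mul_eq_zero.mp hv₁).resolve_left (right_ne_zero_of_mul hpos.ne')
  have e₀ := (eq_inv_smul_iff₀ hw).mpr (wedge_smul_eq_add w₀ w₁ v₀)
  have e₁ := (eq_inv_smul_iff₀ hw).mpr (wedge_smul_eq_add w₀ w₁ v₁)
  refine ⟨(wedge w₀ w₁)⁻¹ * wedge w₀ v₀, (wedge w₀ w₁)⁻¹ * wedge v₁ w₁, ?_, Or.inr ⟨?_, ?_⟩⟩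
  · rw [mul_mul_mul_comm]
    exact mul_pos (mul_self_pos.mpr (inv_ne_zero hw)) hpos
  · conv_lhs => rw [e₀, hv₀w₁, zero_smul, zero_add, smul_smul]
  · conv_lhs => rw [e₁, hw₀v₁, zero_smul, add_zero, smul_smul]

end Classification

lemma cplx_smul {n : ℕ} (l : ℝ) (v : RV n) : cplx (l • v) = (l : ℂ) • cplx v := by
  ext i; simp [cplx]

lemma wedge_cplx (u v : RV 1) : wedge (cplx u) (cplx v) = wedge u v := by
  simp [wedge, cplx]

theorem signSeg_cplx_eq_of_signSeg_eq {P Q : ℝ → Prop} (hP : IsSignCondition P)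
    (hQ : ∀ t > 0, ∀ r, Q (t * r) ↔ Q r) {v₀ v₁ w₀ w₁ : RV 1} (hw : wedge w₀ w₁ ≠ 0)
    (h : signSeg P v₀ v₁ = signSeg P w₀ w₁) :
    signSeg Q (cplx v₀) (cplx v₁) = signSeg Q (cplx w₀) (cplx w₁) := by
  have hv := wedge_ne_zero_of_signSeg_eq hP hw h
  obtain ⟨l₀, l₁, hl, hvw⟩ :=
    exists_smul_eq_of_segForm_mul_nonneg hv hw (segForm_mul_nonneg_of_signSeg_eq hP hv hw h)
  have hform (z : CV 1) :
      segForm (cplx v₀) (cplx v₁) z = l₀ * l₁ * segForm (cplx w₀) (cplx w₁) z := by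
    rcases hvw with ⟨rfl, rfl⟩ | ⟨rfl, rfl⟩
    · rw [cplx_smul, cplx_smul]
      exact segForm_ofReal_smul_ofReal_smul _ _ _ _ _
    · rw [cplx_smul, cplx_smul, segForm_comm (cplx w₁)]
      exact segForm_ofReal_smul_ofReal_smul _ _ _ _ _
  ext p
  induction p using Projectivization.ind with | h z hz => ?_
  rw [mk_mem_signSeg_iff hQ (by rwa [wedge_cplx, Complex.ofReal_ne_zero]) hz,
    mk_mem_signSeg_iff hQ (by rwa [wedge_cplx, Complex.ofReal_ne_zero]) hz, hform, hQ _ hl]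

lemma realSeg_eq_signSeg (v₀ v₁ : RV 1) : realSeg v₀ v₁ = signSeg (0 ≤ ·) v₀ v₁ := rfl

lemma openRealSeg_eq_signSeg (v₀ v₁ : RV 1) : openRealSeg v₀ v₁ = signSeg (0 < ·) v₀ v₁ := rfl

lemma segTube_eq_signSeg (v₀ v₁ : RV 1) :
    segTube v₀ v₁ = signSeg (0 ≤ ·) (cplx v₀) (cplx v₁) := rfl

lemma openSegTube_eq_signSeg (v₀ v₁ : RV 1) :
    openSegTube v₀ v₁ = signSeg (0 < ·) (cplx v₀) (cplx v₁) := rfl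

theorem segTube_eq_of_realSeg_eq {v₀ v₁ w₀ w₁ : RV 1} (hw : wedge w₀ w₁ ≠ 0)
    (h : realSeg v₀ v₁ = realSeg w₀ w₁) : segTube v₀ v₁ = segTube w₀ w₁ :=
  signSeg_cplx_eq_of_signSeg_eq isSignCondition_nonneg isSignCondition_nonneg.mul_iff hw h

theorem openSegTube_eq_of_openRealSeg_eq {v₀ v₁ w₀ w₁ : RV 1} (hw : wedge w₀ w₁ ≠ 0)
    (h : openRealSeg v₀ v₁ = openRealSeg w₀ w₁) : openSegTube v₀ v₁ = openSegTube w₀ w₁ :=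
  signSeg_cplx_eq_of_signSeg_eq isSignCondition_pos isSignCondition_pos.mul_iff hw h

lemma image_chartR_Icc {a b : ℝ} (hab : a < b) :
    chartR '' Set.Icc a b = realSeg ![a, 1] ![b, 1] := by
  rw [realSeg_eq_signSeg, signSeg_vecCons_one isSignCondition_nonneg hab.ne]
  congr 1
  ext t
  simp only [Set.mem_Icc, Set.mem_ofPred_eq, RCLike.re_to_real, RCLike.conj_to_real]
  constructor
  · rintro ⟨hat, htb⟩
    nlinarith
  · intro h
    constructor <;> nlinarith

lemma image_chartR_Ioo {a b : ℝ} (hab : a < b) :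
    chartR '' Set.Ioo a b = openRealSeg ![a, 1] ![b, 1] := by
  rw [openRealSeg_eq_signSeg, signSeg_vecCons_one isSignCondition_pos hab.ne]
  congr 1
  ext t
  simp only [Set.mem_Ioo, Set.mem_ofPred_eq, RCLike.re_to_real, RCLike.conj_to_real]
  constructor
  · rintro ⟨hat, htb⟩
    nlinarith
  · intro h
    constructor <;> nlinarith

lemma cplx_vecCons_one (a : ℝ) : cplx ![a, 1] = ![(a : ℂ), 1] := by
  ext i; fin_cases i <;> simp [cplx]

lemma segTube_vecCons_one {a b : ℝ} (hab : a ≠ b) :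
    segTube ![a, 1] ![b, 1] = chartC '' {z : ℂ | 0 ≤ ((z - a) * conj (b - z)).re} := by
  rw [segTube_eq_signSeg, cplx_vecCons_one, cplx_vecCons_one,
    signSeg_vecCons_one isSignCondition_nonneg (by exact_mod_cast hab)]
  rfl

lemma openSegTube_vecCons_one {a b : ℝ} (hab : a ≠ b) :
    openSegTube ![a, 1] ![b, 1] = chartC '' {z : ℂ | 0 < ((z - a) * conj (b - z)).re} := by
  rw [openSegTube_eq_signSeg, cplx_vecCons_one, cplx_vecCons_one,
    signSeg_vecCons_one isSignCondition_pos (by exact_mod_cast hab)]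
  rfl

lemma re_sub_mul_conj_sub (a b : ℝ) (z : ℂ) :
    ((z - a) * conj (b - z)).re = ((b - a) / 2) ^ 2 - ‖z - ((a + b) / 2 : ℝ)‖ ^ 2 := by
  rw [Complex.sq_norm, Complex.normSq_apply]
  simp [Complex.mul_re]
  ring

lemma setOf_nonneg_re_eq_closedBall {a b : ℝ} (hab : a ≤ b) :
    {z : ℂ | 0 ≤ ((z - a) * conj (b - z)).re} =
      Metric.closedBall (((a + b) / 2 : ℝ) : ℂ) ((b - a) / 2) := by
  ext z
  rw [Set.mem_ofPred_eq, Metric.mem_closedBall, dist_eq_norm, re_sub_mul_conj_sub, sub_nonneg,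
    sq_le_sq₀ (norm_nonneg _) (by linarith)]

lemma setOf_pos_re_eq_ball {a b : ℝ} (hab : a ≤ b) :
    {z : ℂ | 0 < ((z - a) * conj (b - z)).re} =
      Metric.ball (((a + b) / 2 : ℝ) : ℂ) ((b - a) / 2) := by
  ext z
  rw [Set.mem_ofPred_eq, Metric.mem_ball, dist_eq_norm, re_sub_mul_conj_sub, sub_pos,
    sq_lt_sq₀ (norm_nonneg _) (by linarith)]

/-- The elliptic tube of the closed segment `[a,b] ⊆ ℝ ⊆ ℂ ⊆ ℂℙ¹`
(for any choice of lifts of its extremes) is the closed disk with diameter `[a,b]`,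
namely `{z : Re((z-a) conj(b-z)) ≥ 0} = closedBall ((a+b)/2) ((b-a)/2)`; the tube of the
open segment `(a,b)` is the corresponding open disk. -/
theorem segTube_eq_disk (a b : ℝ) (hab : a < b) :
    (∀ v₀ v₁ : RV 1, v₀ ≠ 0 → v₁ ≠ 0 → realSeg v₀ v₁ = chartR '' Set.Icc a b →
      segTube v₀ v₁ = chartC '' {z : ℂ | 0 ≤ ((z - a) * conj (b - z)).re}) ∧
    {z : ℂ | 0 ≤ ((z - a) * conj (b - z)).re} =
      Metric.closedBall (((a + b) / 2 : ℝ) : ℂ) ((b - a) / 2) ∧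
    (∀ v₀ v₁ : RV 1, v₀ ≠ 0 → v₁ ≠ 0 → openRealSeg v₀ v₁ = chartR '' Set.Ioo a b →
      openSegTube v₀ v₁ = chartC '' Metric.ball (((a + b) / 2 : ℝ) : ℂ) ((b - a) / 2)) := by
  have hw : wedge ![a, 1] ![b, 1] ≠ 0 := by simpa [wedge, sub_eq_zero] using hab.ne
  refine ⟨fun v₀ v₁ _ _ hseg => ?_, setOf_nonneg_re_eq_closedBall hab.le,
    fun v₀ v₁ _ _ hseg => ?_⟩
  · rw [segTube_eq_of_realSeg_eq hw (hseg.trans (image_chartR_Icc hab)),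
      segTube_vecCons_one hab.ne]
  · rw [openSegTube_eq_of_openRealSeg_eq hw (hseg.trans (image_chartR_Ioo hab)),
      openSegTube_vecCons_one hab.ne, setOf_pos_re_eq_ball hab.le]
end
end
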